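/- arXiv:2201.12541 — 6 statements merged into one kernel-verified Lean document; each statement's English description precedes it below -/
import Mathlib

section
/- Let γ > 0 and write γ = n + ε with n ∈ ℕ and 0 < ε ≤ 1, and let δ > 0. Then there exists a constant C_{δ,γ} ≥ 0, depending only on δ and γ, with the following property: for all normed vector spaces E and F, every subset U ⊆ E, every M ≥ 0, and every collection f = (f⁰, f¹, …, fⁿ) on U, if for every x ∈ U the restriction of f to B(x,δ) ∩ U is Lip-γ with Lip-γ norm at most M, then f is Lip-γ on U and ‖f‖_{Lip-γ} ≤ C_{δ,γ} · M. -/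
open Metric Set

noncomputable section

/-- The Taylor remainder of order `k` associated to the collection
`f = (f⁰, f¹, …, fⁿ)` (each `fᵏ` viewed as a continuous `k`-linear map),
evaluated at the elementary tensor `v₁ ⊗ ⋯ ⊗ v_k`:
`Rₖ(x,y)(v) = fᵏ(x)(v) - ∑_{j=k}^{n} fʲ(y)(v ⊗ (x-y)^{⊗(j-k)}/(j-k)!)`. -/
def lipRemainder {E F : Type*} [NormedAddCommGroup E] [NormedSpace ℝ E]
    [NormedAddCommGroup F] [NormedSpace ℝ F]
    (n : ℕ) (f : ∀ k : ℕ, E → ContinuousMultilinearMap ℝ (fun _ : Fin k => E) F)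
    (k : ℕ) (x y : E) (v : Fin k → E) : F :=
  f k x v - ∑ j ∈ Finset.range (n - k + 1),
    ((j.factorial : ℝ)⁻¹) • f (k + j) y (Fin.append v fun _ : Fin j => x - y)

/-- The collection `(f^{k₀}, …, fⁿ)` satisfies the `Lip-γ` bounds with constant `M`
on `U`: each `fᵏ` is bounded by `M` (as a multilinear map) and each remainder of
order `k` is bounded by `M ‖x-y‖^{γ-k}` (times the norm of the tensor).
Taking `k₀ = 0` gives the usual notion of a `Lip-γ` collection; taking `k₀ = 1`
expresses that the shifted collection `(f¹, …, fⁿ)` is `Lip-(γ-1)`. -/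
def IsLipCollBetween {E F : Type*} [NormedAddCommGroup E] [NormedSpace ℝ E]
    [NormedAddCommGroup F] [NormedSpace ℝ F]
    (γ : ℝ) (k₀ n : ℕ) (M : ℝ)
    (f : ∀ k : ℕ, E → ContinuousMultilinearMap ℝ (fun _ : Fin k => E) F)
    (U : Set E) : Prop :=
  (∀ k, k₀ ≤ k → k ≤ n → ∀ x ∈ U, ∀ v : Fin k → E,
      ‖f k x v‖ ≤ M * ∏ i, ‖v i‖) ∧
  (∀ k, k₀ ≤ k → k ≤ n → ∀ x ∈ U, ∀ y ∈ U, ∀ v : Fin k → E,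
      ‖lipRemainder n f k x y v‖ ≤ M * ‖x - y‖ ^ (γ - k) * ∏ i, ‖v i‖)

/-- Each member of the collection takes values in the symmetric multilinear maps. -/
def IsSymmColl {E F : Type*} [NormedAddCommGroup E] [NormedSpace ℝ E]
    [NormedAddCommGroup F] [NormedSpace ℝ F]
    (n : ℕ)
    (f : ∀ k : ℕ, E → ContinuousMultilinearMap ℝ (fun _ : Fin k => E) F)
    (U : Set E) : Prop :=
  ∀ k, k ≤ n → ∀ x ∈ U, ∀ (σ : Equiv.Perm (Fin k)) (v : Fin k → E),
    f k x (v ∘ σ) = f k x v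
/-- **Lipschitz regularity is a uniform local property** (Proposition 2.2).
There is a constant `C` depending only on `δ` and `γ` such that: if around every
point of `U` the collection `f = (f⁰,…,fⁿ)` is Lip-γ on `B(x,δ) ∩ U` with norm at
most `M`, then `f` is Lip-γ on all of `U` with norm at most `C · M`. -/
theorem statement0 (γ δ : ℝ) (n : ℕ) (ε : ℝ) (hε0 : 0 < ε) (hε1 : ε ≤ 1)
    (hγ : γ = n + ε) (hδ : 0 < δ) :
    ∃ C : ℝ, 0 ≤ C ∧
      ∀ (E : Type*) (F : Type*) [NormedAddCommGroup E] [NormedSpace ℝ E]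
        [NormedAddCommGroup F] [NormedSpace ℝ F]
        (U : Set E) (M : ℝ), 0 ≤ M →
        ∀ (f : ∀ k : ℕ, E → ContinuousMultilinearMap ℝ (fun _ : Fin k => E) F),
        IsSymmColl n f U →
        (∀ x ∈ U, IsLipCollBetween γ 0 n M f (Metric.ball x δ ∩ U)) →
        IsLipCollBetween γ 0 n (C * M) f U := by
  have hγ0 : 0 < γ := by rw [hγ]; positivity
  set c : ℝ := min δ 1 with hcdef
  have hc0 : 0 < c := lt_min hδ one_pos
  set K : ℝ := max 1 (c ^ (-γ)) with hKdef
  have hK1 : (1:ℝ) ≤ K := le_max_left _ _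
  have hKc : c ^ (-γ) ≤ K := le_max_right _ _
  refine ⟨((n : ℝ) + 2) * K, by positivity, ?_⟩
  intro E F _ _ _ _ U M hM f _hsym hloc
  have hC1 : (1:ℝ) ≤ ((n : ℝ) + 2) * K := by
    have hn : (0:ℝ) ≤ (n:ℝ) := Nat.cast_nonneg n
    nlinarith
  constructor
  · intro k _ hk x hx v
    have hxmem : x ∈ Metric.ball x δ ∩ U := ⟨Metric.mem_ball_self hδ, hx⟩
    have h1 := (hloc x hx).1 k (Nat.zero_le _) hk x hxmem v
    have hp : 0 ≤ ∏ i, ‖v i‖ := Finset.prod_nonneg fun i _ => norm_nonneg _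
    calc ‖f k x v‖ ≤ M * ∏ i, ‖v i‖ := h1
      _ = 1 * (M * ∏ i, ‖v i‖) := by ring
      _ ≤ (((n : ℝ) + 2) * K) * (M * ∏ i, ‖v i‖) :=
          mul_le_mul_of_nonneg_right hC1 (mul_nonneg hM hp)
      _ = ((n : ℝ) + 2) * K * M * ∏ i, ‖v i‖ := by ring
  · intro k _ hk x hx y hy v
    have hp : 0 ≤ ∏ i, ‖v i‖ := Finset.prod_nonneg fun i _ => norm_nonneg _
    by_cases hxy : ‖x - y‖ < δ
    · have hxmem : x ∈ Metric.ball x δ ∩ U := ⟨Metric.mem_ball_self hδ, hx⟩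
      have hymem : y ∈ Metric.ball x δ ∩ U :=
        ⟨by rw [Metric.mem_ball, dist_eq_norm, ← norm_sub_rev]; exact hxy, hy⟩
      have h1 := (hloc x hx).2 k (Nat.zero_le _) hk x hxmem y hymem v
      have hr : 0 ≤ ‖x - y‖ ^ (γ - (k:ℝ)) := Real.rpow_nonneg (norm_nonneg _) _
      calc ‖lipRemainder n f k x y v‖ ≤ M * ‖x - y‖ ^ (γ - (k:ℝ)) * ∏ i, ‖v i‖ := h1
        _ = 1 * (M * ‖x - y‖ ^ (γ - (k:ℝ)) * ∏ i, ‖v i‖) := by ring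
        _ ≤ (((n : ℝ) + 2) * K) * (M * ‖x - y‖ ^ (γ - (k:ℝ)) * ∏ i, ‖v i‖) :=
            mul_le_mul_of_nonneg_right hC1 (by positivity)
        _ = ((n : ℝ) + 2) * K * M * ‖x - y‖ ^ (γ - (k:ℝ)) * ∏ i, ‖v i‖ := by ring
    · push_neg at hxy
      set r : ℝ := ‖x - y‖ with hrdef
      have hr0 : 0 < r := lt_of_lt_of_le hδ hxy
      have hrγ : 0 ≤ r ^ (γ - (k:ℝ)) := Real.rpow_nonneg hr0.le _
      have hkn : (k:ℝ) ≤ (n:ℝ) := Nat.cast_le.mpr hk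
      -- key estimate
      have key : ∀ j : ℕ, j ≤ n - k → r ^ j ≤ K * r ^ (γ - (k:ℝ)) := by
        intro j hj
        have hjγ : (j:ℝ) ≤ γ - k := by
          have h1 : ((n - k : ℕ) : ℝ) = (n:ℝ) - k := by
            rw [Nat.cast_sub hk]
          have h2 : (j:ℝ) ≤ ((n - k : ℕ) : ℝ) := Nat.cast_le.mpr hj
          rw [hγ]; rw [h1] at h2; linarith
        rcases le_or_gt 1 r with h1 | h1
        · have h2 : r ^ ((j:ℝ)) ≤ r ^ (γ - (k:ℝ)) :=
            Real.rpow_le_rpow_of_exponent_le h1 hjγ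
          rw [Real.rpow_natCast] at h2
          calc r ^ j ≤ r ^ (γ - (k:ℝ)) := h2
            _ ≤ K * r ^ (γ - (k:ℝ)) := le_mul_of_one_le_left hrγ hK1
        · have hrj : r ^ j ≤ 1 := pow_le_one₀ hr0.le h1.le
          have h2 : r ^ γ ≤ r ^ (γ - (k:ℝ)) :=
            Real.rpow_le_rpow_of_exponent_ge hr0 h1.le
              (by have hk0 : (0:ℝ) ≤ (k:ℝ) := Nat.cast_nonneg k; linarith)
          have h3 : c ^ γ ≤ r ^ γ :=
            Real.rpow_le_rpow hc0.le (le_trans (min_le_left _ _) hxy) hγ0.le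
          have h5 : c ^ (-γ) * c ^ γ = 1 := by
            rw [← Real.rpow_add hc0]; simp
          have h6 : 0 < c ^ (-γ) := Real.rpow_pos_of_pos hc0 _
          have h4 : (1:ℝ) ≤ c ^ (-γ) * r ^ (γ - (k:ℝ)) := by
            calc (1:ℝ) = c ^ (-γ) * c ^ γ := h5.symm
              _ ≤ c ^ (-γ) * r ^ γ := mul_le_mul_of_nonneg_left h3 h6.le
              _ ≤ c ^ (-γ) * r ^ (γ - (k:ℝ)) := mul_le_mul_of_nonneg_left h2 h6.le
          calc r ^ j ≤ 1 := hrj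
            _ ≤ c ^ (-γ) * r ^ (γ - (k:ℝ)) := h4
            _ ≤ K * r ^ (γ - (k:ℝ)) := mul_le_mul_of_nonneg_right hKc hrγ
      -- bound each summand
      have hterm : ∀ j ∈ Finset.range (n - k + 1),
          ‖((j.factorial : ℝ)⁻¹) • f (k + j) y (Fin.append v fun _ : Fin j => x - y)‖
            ≤ M * (K * r ^ (γ - (k:ℝ))) * ∏ i, ‖v i‖ := by
        intro j hj
        rw [Finset.mem_range, Nat.lt_succ_iff] at hj
        have hkj : k + j ≤ n := by omega
        have hymem : y ∈ Metric.ball y δ ∩ U := ⟨Metric.mem_ball_self hδ, hy⟩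
        have hb := (hloc y hy).1 (k + j) (Nat.zero_le _) hkj y hymem
          (Fin.append v fun _ : Fin j => x - y)
        have hprod : (∏ i : Fin (k + j), ‖Fin.append v (fun _ : Fin j => x - y) i‖)
            = (∏ i, ‖v i‖) * r ^ j := by
          rw [Fin.prod_univ_add]
          simp [Fin.append_left, Fin.append_right, hrdef]
        rw [hprod] at hb
        have hfac : ((j.factorial : ℝ))⁻¹ ≤ 1 := by
          rw [inv_le_one_iff₀]
          right; exact_mod_cast Nat.one_le_iff_ne_zero.mpr j.factorial_ne_zero
        have hfac0 : (0:ℝ) ≤ ((j.factorial : ℝ))⁻¹ := by positivity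
        rw [norm_smul, Real.norm_eq_abs, abs_of_nonneg hfac0]
        have hkey := key j hj
        have hrj0 : (0:ℝ) ≤ r ^ j := pow_nonneg hr0.le j
        have hfn : (0:ℝ) ≤ ‖f (k + j) y (Fin.append v fun _ : Fin j => x - y)‖ :=
          norm_nonneg _
        calc ((j.factorial : ℝ))⁻¹ * ‖f (k + j) y (Fin.append v fun _ : Fin j => x - y)‖
            ≤ ‖f (k + j) y (Fin.append v fun _ : Fin j => x - y)‖ :=
              mul_le_of_le_one_left hfn hfac
          _ ≤ M * ((∏ i, ‖v i‖) * r ^ j) := hb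
          _ = (M * ∏ i, ‖v i‖) * r ^ j := by ring
          _ ≤ (M * ∏ i, ‖v i‖) * (K * r ^ (γ - (k:ℝ))) :=
              mul_le_mul_of_nonneg_left hkey (mul_nonneg hM hp)
          _ = M * (K * r ^ (γ - (k:ℝ))) * ∏ i, ‖v i‖ := by ring
      -- assemble
      have hxmem : x ∈ Metric.ball x δ ∩ U := ⟨Metric.mem_ball_self hδ, hx⟩
      have hfx := (hloc x hx).1 k (Nat.zero_le _) hk x hxmem v
      have hsum : ‖∑ j ∈ Finset.range (n - k + 1),
          ((j.factorial : ℝ)⁻¹) • f (k + j) y (Fin.append v fun _ : Fin j => x - y)‖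
          ≤ (((n - k : ℕ) : ℝ) + 1) * (M * (K * r ^ (γ - (k:ℝ))) * ∏ i, ‖v i‖) := by
        calc ‖∑ j ∈ Finset.range (n - k + 1),
            ((j.factorial : ℝ)⁻¹) • f (k + j) y (Fin.append v fun _ : Fin j => x - y)‖
            ≤ ∑ j ∈ Finset.range (n - k + 1),
              ‖((j.factorial : ℝ)⁻¹) • f (k + j) y (Fin.append v fun _ : Fin j => x - y)‖ :=
              norm_sum_le _ _
          _ ≤ ∑ _j ∈ Finset.range (n - k + 1), M * (K * r ^ (γ - (k:ℝ))) * ∏ i, ‖v i‖ :=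
              Finset.sum_le_sum hterm
          _ = (((n - k : ℕ) : ℝ) + 1) * (M * (K * r ^ (γ - (k:ℝ))) * ∏ i, ‖v i‖) := by
              rw [Finset.sum_const, Finset.card_range, nsmul_eq_mul]; push_cast; ring
      have hone : (1:ℝ) ≤ K * r ^ (γ - (k:ℝ)) := by
        have := key 0 (Nat.zero_le _); simpa using this
      have hnk : ((n - k : ℕ) : ℝ) ≤ (n:ℝ) := Nat.cast_le.mpr (Nat.sub_le n k)
      have hKpos : (0:ℝ) ≤ K := by linarith
      calc ‖lipRemainder n f k x y v‖
          ≤ ‖f k x v‖ + ‖∑ j ∈ Finset.range (n - k + 1),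
              ((j.factorial : ℝ)⁻¹) • f (k + j) y (Fin.append v fun _ : Fin j => x - y)‖ := by
            rw [lipRemainder]; exact norm_sub_le _ _
        _ ≤ M * ∏ i, ‖v i‖ + (((n - k : ℕ) : ℝ) + 1) * (M * (K * r ^ (γ - (k:ℝ))) * ∏ i, ‖v i‖) := by
            exact add_le_add hfx hsum
        _ ≤ ((n : ℝ) + 2) * K * M * r ^ (γ - (k:ℝ)) * ∏ i, ‖v i‖ := by
            have h7 : M * ∏ i, ‖v i‖ ≤ M * (K * r ^ (γ - (k:ℝ))) * ∏ i, ‖v i‖ := by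
              calc M * ∏ i, ‖v i‖ = (M * ∏ i, ‖v i‖) * 1 := by ring
                _ ≤ (M * ∏ i, ‖v i‖) * (K * r ^ (γ - (k:ℝ))) :=
                    mul_le_mul_of_nonneg_left hone (mul_nonneg hM hp)
                _ = M * (K * r ^ (γ - (k:ℝ))) * ∏ i, ‖v i‖ := by ring
            have h8 : ((n - k : ℕ) : ℝ) + 1 + 1 ≤ (n:ℝ) + 2 := by linarith
            have h9 : (0:ℝ) ≤ M * (K * r ^ (γ - (k:ℝ))) * ∏ i, ‖v i‖ :=
              mul_nonneg (mul_nonneg hM (by positivity)) hp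
            nlinarith

end
end

section
/- Let n ∈ ℕ, 0 < ε ≤ 1 and M ≥ 0. Let E and F be normed vector spaces and U ⊆ E. Let f⁰ : U → F and fᵏ : U → L_s(E^{⊗k}, F) for k ∈ {1,…,n}. Consider the assertions: (A1) the collection (f⁰, f¹, …, fⁿ) is Lip-(n+ε) on U with ‖(f⁰,…,fⁿ)‖_{Lip-(n+ε)} ≤ M; (A2) f⁰ is n times Fréchet differentiable on U with successive derivatives f¹, …, fⁿ, the sup norms ‖f⁰‖_∞, …, ‖fⁿ‖_∞ are all at most M, and ‖fⁿ(x) − fⁿ(y)‖ ≤ M‖x−y‖^ε for all x, y ∈ U. Then: if U is open, (A1) implies (A2); and if U is open and convex, (A1) and (A2) are equivalent. -/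
/-!
(A1) ⇒ (A2). Expanding `R_m(y, x)` shows that `fᵐ(y) - fᵐ(x) - fᵐ⁺¹(x)(y - x, ·)` is `R_m(y, x)`
plus terms of degree at least two in `y - x`; since `n + ε - m > 1`, all of them are
`o(‖y - x‖)`, so `fᵐ⁺¹` is the derivative of `fᵐ` (symmetry moves `y - x` to the first slot, where
`curryLeft` puts it). The top remainder `R_n(x, y) = fⁿ(x) - fⁿ(y)` is the Hölder bound.

(A2) ⇒ (A1) on convex `U`, by downward induction on `k`: along `t ↦ y + t • (x - y)` the
derivative of `R_k(y + t • (x - y), y)(v)` is `R_{k+1}(y + t • (x - y), y)(v, x - y)`, so the mean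
value theorem turns the bound `M ‖x - y‖^(γ-k-1)` for `R_{k+1}` into `M ‖x - y‖^(γ-k)` for `R_k`.
-/

open Metric Set

noncomputable section

open Asymptotics Filter Topology

theorem isLittleO_norm_sub_rpow {E : Type*} [SeminormedAddCommGroup E] {p : ℝ} (hp : 1 < p)
    (x : E) : (fun y => ‖y - x‖ ^ p) =o[𝓝 x] fun y => y - x := by
  have hsmall : Tendsto (fun y => ‖y - x‖ ^ (p - 1)) (𝓝 x) (𝓝 0) := by
    simpa [Real.zero_rpow (sub_pos.2 hp).ne'] using
      (tendsto_norm_sub_self x).rpow_const (Or.inr (sub_pos.2 hp).le)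
  have h : (fun y => ‖y - x‖ ^ (p - 1) * ‖y - x‖) =o[𝓝 x] fun y => (1 : ℝ) * ‖y - x‖ :=
    ((isLittleO_one_iff ℝ).2 hsmall).mul_isBigO (isBigO_refl _ _)
  simp only [one_mul, isLittleO_norm_right] at h
  refine h.congr_left fun y => ?_
  rw [← Real.rpow_add_one' (norm_nonneg _) (by linarith), sub_add_cancel]

theorem continuousOn_of_norm_sub_le_rpow {E G : Type*} [SeminormedAddCommGroup E]
    [SeminormedAddCommGroup G] {g : E → G} {U : Set E} {M ε : ℝ} (hε : 0 < ε)
    (hg : ∀ x ∈ U, ∀ y ∈ U, ‖g x - g y‖ ≤ M * ‖x - y‖ ^ ε) : ContinuousOn g U := by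
  intro x hx
  have hsmall : Tendsto (fun y => M * ‖y - x‖ ^ ε) (𝓝[U] x) (𝓝 0) := by
    simpa [Real.zero_rpow hε.ne'] using
      (((tendsto_norm_sub_self x).rpow_const (Or.inr hε.le)).const_mul M).mono_left
        nhdsWithin_le_nhds
  refine tendsto_iff_norm_sub_tendsto_zero.2 (squeeze_zero_norm' ?_ hsmall)
  filter_upwards [self_mem_nhdsWithin] with y hy
  simpa using hg y hy x hx

theorem ContinuousMultilinearMap.apply_append_const_smul {R M N : Type*} [CommSemiring R]
    [AddCommMonoid M] [Module R M] [TopologicalSpace M]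
    [AddCommMonoid N] [Module R N] [TopologicalSpace N] {k j : ℕ}
    (g : ContinuousMultilinearMap R (fun _ : Fin (k + j) => M) N) (v : Fin k → M) (t : R)
    (h : M) : g (Fin.append v fun _ : Fin j => t • h) = t ^ j • g (Fin.append v fun _ => h) := by
  have hscale : (Fin.append v fun _ : Fin j => t • h) =
      fun l => Fin.append (fun _ : Fin k => (1 : R)) (fun _ : Fin j => t) l •
        Fin.append v (fun _ : Fin j => h) l := by
    funext l
    refine Fin.addCases (fun i => ?_) (fun i => ?_) l <;> simp
  rw [hscale, g.map_smul_univ, Fin.prod_univ_add]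
  simp

theorem apply_cons_eq_apply_snoc_of_perm_invariant {α β : Type*} {k : ℕ}
    (g : (Fin (k + 1) → α) → β)
    (hg : ∀ (σ : Equiv.Perm (Fin (k + 1))) (w : Fin (k + 1) → α), g (w ∘ σ) = g w)
    (v : Fin k → α) (h : α) : g (Fin.cons h v) = g (Fin.snoc v h) := by
  rw [Fin.snoc_eq_cons_rotate]
  exact (hg _ _).symm

section
variable {E F : Type*} [NormedAddCommGroup E] [NormedSpace ℝ E]
  [NormedAddCommGroup F] [NormedSpace ℝ F]
  (f : ∀ k : ℕ, E → ContinuousMultilinearMap ℝ (fun _ : Fin k => E) F)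

theorem apply_append_snoc_const {k i : ℕ} (y : E) (v : Fin k → E) (h : E) :
    f (k + 1 + i) y (Fin.append (Fin.snoc v h) fun _ => h) =
      f (k + (i + 1)) y (Fin.append v fun _ => h) := by
  have hcast : ∀ {a b : ℕ} (e : a = b) (w : Fin b → E), f a y (w ∘ Fin.cast e) = f b y w := by
    rintro a _ rfl w; rfl
  have hcons : (Fin.cons h fun _ : Fin i => h) = fun _ : Fin (i + 1) => h := by
    funext l; exact Fin.cases rfl (fun _ => rfl) l
  rw [Fin.append_left_snoc, hcons, hcast]

theorem lipRemainder_eq_sub_sub_sum (n k : ℕ) (x y : E) (v : Fin k → E) :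
    lipRemainder n f k x y v = f k x v - f k y v -
      ∑ j ∈ Finset.range (n - k),
        ((j + 1).factorial : ℝ)⁻¹ • f (k + (j + 1)) y (Fin.append v fun _ => x - y) := by
  rw [lipRemainder, Finset.sum_range_succ', sub_sub, add_comm (f k y v)]
  simp [Fin.append_right_nil]

theorem lipRemainder_self (n k : ℕ) (x : E) (v : Fin k → E) : lipRemainder n f k x x v = 0 := by
  rw [lipRemainder_eq_sub_sub_sum, sub_self, zero_sub, neg_eq_zero]
  refine Finset.sum_eq_zero fun j _ => ?_
  rw [(f _ x).map_coord_zero (Fin.natAdd k 0) (by simp), smul_zero]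

theorem lipRemainder_top (n : ℕ) (x y : E) (v : Fin n → E) :
    lipRemainder n f n x y v = f n x v - f n y v := by
  simp [lipRemainder_eq_sub_sub_sum]

theorem sub_sub_curryLeft_apply_eq_lipRemainder_add {n m : ℕ} (hmn : m < n) {x : E}
    (hsymm : ∀ (σ : Equiv.Perm (Fin (m + 1))) (w : Fin (m + 1) → E),
      f (m + 1) x (w ∘ σ) = f (m + 1) x w)
    (y : E) (v : Fin m → E) :
    (f m y - f m x - (f (m + 1) x).curryLeft (y - x)) v = lipRemainder n f m y x v +
      ∑ j ∈ Finset.range (n - m - 1),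
        ((j + 1 + 1).factorial : ℝ)⁻¹ • f (m + (j + 1 + 1)) x (Fin.append v fun _ => y - x) := by
  have hlinear : (f (m + 1) x).curryLeft (y - x) v =
      ((0 + 1).factorial : ℝ)⁻¹ • f (m + (0 + 1)) x (Fin.append v fun _ => y - x) := by
    rw [ContinuousMultilinearMap.curryLeft_apply,
      apply_cons_eq_apply_snoc_of_perm_invariant (f (m + 1) x) hsymm, Fin.append_right_eq_snoc]
    simp
  rw [lipRemainder_eq_sub_sub_sum,
    show Finset.range (n - m) = Finset.range (n - m - 1 + 1) by congr 1; omega,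
    Finset.sum_range_succ', sub_apply, sub_apply, hlinear]
  abel

theorem hasFDerivWithinAt_of_norm_lipRemainder_le {n m : ℕ} (hmn : m < n) {U : Set E} {x : E}
    {M p : ℝ} (hM : 0 ≤ M) (hp : 1 < p)
    (hsymm : ∀ (σ : Equiv.Perm (Fin (m + 1))) (w : Fin (m + 1) → E),
      f (m + 1) x (w ∘ σ) = f (m + 1) x w)
    (hbound : ∀ j ≤ n, ∀ v : Fin j → E, ‖f j x v‖ ≤ M * ∏ i, ‖v i‖)
    (hrem : ∀ y ∈ U, ∀ v : Fin m → E,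
      ‖lipRemainder n f m y x v‖ ≤ M * ‖y - x‖ ^ p * ∏ i, ‖v i‖) :
    HasFDerivWithinAt (f m) ((f (m + 1) x).curryLeft) U x := by
  set φ : E → ℝ := fun y => M * ‖y - x‖ ^ p + ∑ j ∈ Finset.range (n - m - 1),
    ((j + 1 + 1).factorial : ℝ)⁻¹ * M * ‖y - x‖ ^ (j + 1 + 1)
  have hφ : φ =o[𝓝[U] x] fun y => y - x := by
    have hpow (j : ℕ) : (fun y => ((j + 1 + 1).factorial : ℝ)⁻¹ * M * ‖y - x‖ ^ (j + 1 + 1))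
        =o[𝓝 x] fun y => y - x :=
      (isLittleO_pow_sub_sub x (by omega)).const_mul_left _
    refine ((((isLittleO_norm_sub_rpow hp x).const_mul_left M).add
      (IsLittleO.sum (s := Finset.range (n - m - 1)) fun j _ => hpow j)).mono
        nhdsWithin_le_nhds).congr_left fun y => ?_
    simp [φ]
  have hle : ∀ y ∈ U, ‖f m y - f m x - (f (m + 1) x).curryLeft (y - x)‖ ≤ φ y := by
    intro y hy
    refine ContinuousMultilinearMap.opNorm_le_bound (by positivity) fun v => ?_
    rw [sub_sub_curryLeft_apply_eq_lipRemainder_add f hmn hsymm, add_mul, Finset.sum_mul]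
    refine (norm_add_le _ _).trans (add_le_add (hrem y hy v)
      ((norm_sum_le _ _).trans (Finset.sum_le_sum fun j hj => ?_)))
    have hterm := hbound (m + (j + 1 + 1)) (by simp at hj; omega) (Fin.append v fun _ => y - x)
    rw [Fin.prod_univ_add] at hterm
    simp only [Fin.append_left, Fin.append_right, Finset.prod_const, Finset.card_univ,
      Fintype.card_fin] at hterm
    rw [norm_smul, Real.norm_of_nonneg (by positivity)]
    calc _ ≤ ((j + 1 + 1).factorial : ℝ)⁻¹ * (M * ((∏ i, ‖v i‖) * ‖y - x‖ ^ (j + 1 + 1))) := by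
          gcongr
      _ = _ := by ring
  refine hasFDerivWithinAt_iff_isLittleO.2 ((IsBigO.of_bound 1 ?_).trans_isLittleO hφ)
  filter_upwards [self_mem_nhdsWithin] with y hy
  exact (hle y hy).trans (by rw [one_mul]; exact le_abs_self _)

theorem hasDerivWithinAt_lipRemainder_line {n k : ℕ} (hk : k < n) {U : Set E}
    (hderiv : ∀ z ∈ U, HasFDerivWithinAt (f k) ((f (k + 1) z).curryLeft) U z)
    (hsymm : ∀ z ∈ U, ∀ (σ : Equiv.Perm (Fin (k + 1))) (w : Fin (k + 1) → E),
      f (k + 1) z (w ∘ σ) = f (k + 1) z w)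
    {y h : E} {S : Set ℝ} (hS : ∀ t ∈ S, y + t • h ∈ U) (v : Fin k → E) {t : ℝ} (ht : t ∈ S) :
    HasDerivWithinAt (fun t => lipRemainder n f k (y + t • h) y v)
      (lipRemainder n f (k + 1) (y + t • h) y (Fin.snoc v h)) S t := by
  have hpoly : (fun s => lipRemainder n f k (y + s • h) y v) = fun s => f k (y + s • h) v -
      ∑ j ∈ Finset.range (n - k + 1),
        (s ^ j * (j.factorial : ℝ)⁻¹) • f (k + j) y (Fin.append v fun _ => h) := by
    funext s
    simp only [lipRemainder, add_sub_cancel_left, ContinuousMultilinearMap.apply_append_const_smul,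
      smul_smul, mul_comm]
  have hline : HasDerivWithinAt (fun s => y + s • h) h S t := by
    simpa using ((hasDerivWithinAt_id t S).smul_const h).const_add y
  have hpath : HasDerivWithinAt (fun s => f k (y + s • h) v)
      (f (k + 1) (y + t • h) (Fin.cons h v)) S t := by
    simpa [Function.comp_def] using
      (ContinuousMultilinearMap.apply ℝ _ F v).hasFDerivAt.comp_hasDerivWithinAt t
        ((hderiv _ (hS t ht)).comp_hasDerivWithinAt t hline hS)
  have hsum : HasDerivWithinAt (fun s => ∑ j ∈ Finset.range (n - k + 1),
        (s ^ j * (j.factorial : ℝ)⁻¹) • f (k + j) y (Fin.append v fun _ => h))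
      (∑ j ∈ Finset.range (n - k + 1), ((j * t ^ (j - 1)) * (j.factorial : ℝ)⁻¹) •
        f (k + j) y (Fin.append v fun _ => h)) S t :=
    HasDerivWithinAt.fun_sum fun j _ => ((hasDerivWithinAt_pow j t).mul_const _).smul_const _
  rw [hpoly]
  convert hpath.fun_sub hsum using 1
  unfold lipRemainder
  rw [add_sub_cancel_left,
    apply_cons_eq_apply_snoc_of_perm_invariant (f (k + 1) _) (hsymm _ (hS t ht)),
    Finset.sum_range_succ' _ (n - k), show n - (k + 1) + 1 = n - k by omega]
  simp only [CharP.cast_eq_zero, zero_mul, zero_smul, add_zero]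
  congr 1
  refine Finset.sum_congr rfl fun i _ => ?_
  rw [ContinuousMultilinearMap.apply_append_const_smul, apply_append_snoc_const, smul_smul,
    Nat.add_sub_cancel, Nat.factorial_succ]
  congr 1
  push_cast
  field_simp

theorem norm_lipRemainder_le_of_succ {n k : ℕ} (hk : k < n) {U : Set E} (hU : Convex ℝ U)
    (hderiv : ∀ z ∈ U, HasFDerivWithinAt (f k) ((f (k + 1) z).curryLeft) U z)
    (hsymm : ∀ z ∈ U, ∀ (σ : Equiv.Perm (Fin (k + 1))) (w : Fin (k + 1) → E),
      f (k + 1) z (w ∘ σ) = f (k + 1) z w)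
    {M p : ℝ} (hM : 0 ≤ M) (hp : 0 ≤ p)
    (hsucc : ∀ x ∈ U, ∀ y ∈ U, ∀ v : Fin (k + 1) → E,
      ‖lipRemainder n f (k + 1) x y v‖ ≤ M * ‖x - y‖ ^ p * ∏ i, ‖v i‖)
    {x y : E} (hx : x ∈ U) (hy : y ∈ U) (v : Fin k → E) :
    ‖lipRemainder n f k x y v‖ ≤ M * ‖x - y‖ ^ (p + 1) * ∏ i, ‖v i‖ := by
  have hseg : ∀ t ∈ Icc (0 : ℝ) 1, y + t • (x - y) ∈ U :=
    fun t ht => hU.add_smul_sub_mem hy hx ht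
  have hderiv_le : ∀ t ∈ Ico (0 : ℝ) 1,
      ‖lipRemainder n f (k + 1) (y + t • (x - y)) y (Fin.snoc v (x - y))‖ ≤
        M * ‖x - y‖ ^ (p + 1) * ∏ i, ‖v i‖ := by
    intro t ht
    calc _ ≤ M * ‖y + t • (x - y) - y‖ ^ p * ∏ i, ‖Fin.snoc (α := fun _ => E) v (x - y) i‖ :=
          hsucc _ (hseg t (Ico_subset_Icc_self ht)) y hy _
      _ = M * (t * ‖x - y‖) ^ p * ((∏ i, ‖v i‖) * ‖x - y‖) := by
          rw [add_sub_cancel_left, norm_smul, Real.norm_of_nonneg ht.1, Fin.prod_univ_castSucc]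
          simp
      _ ≤ M * ‖x - y‖ ^ p * ((∏ i, ‖v i‖) * ‖x - y‖) := by
          gcongr
          exacts [mul_nonneg ht.1 (norm_nonneg _),
            mul_le_of_le_one_left (norm_nonneg _) ht.2.le]
      _ = _ := by
          rw [Real.rpow_add_one' (norm_nonneg _) (by linarith)]
          ring
  simpa [lipRemainder_self] using norm_image_sub_le_of_norm_deriv_le_segment_01'
    (fun t ht => hasDerivWithinAt_lipRemainder_line f hk hderiv hsymm hseg v ht) hderiv_le

theorem norm_le_of_isLipCollBetween {γ M : ℝ} (hM : 0 ≤ M) {n : ℕ} {U : Set E}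
    (hlip : IsLipCollBetween γ 0 n M f U) : ∀ k ≤ n, ∀ x ∈ U, ‖f k x‖ ≤ M :=
  fun k hk x hx => ContinuousMultilinearMap.opNorm_le_bound hM (hlip.1 k k.zero_le hk x hx)

theorem norm_sub_le_of_isLipCollBetween {n : ℕ} {ε M : ℝ} (hM : 0 ≤ M) {U : Set E}
    (hlip : IsLipCollBetween (n + ε) 0 n M f U) :
    ∀ x ∈ U, ∀ y ∈ U, ‖f n x - f n y‖ ≤ M * ‖x - y‖ ^ ε := by
  intro x hx y hy
  refine ContinuousMultilinearMap.opNorm_le_bound (by positivity) fun v => ?_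
  simpa [lipRemainder_top, mul_assoc] using hlip.2 n n.zero_le le_rfl x hx y hy v

theorem hasFTaylorSeriesUpToOn_of_isLipCollBetween {n : ℕ} {ε M : ℝ} (hε : 0 < ε) (hM : 0 ≤ M)
    {U : Set E} (hsymm : IsSymmColl n f U) (hlip : IsLipCollBetween (n + ε) 0 n M f U) :
    HasFTaylorSeriesUpToOn n (fun x => f 0 x 0) (fun x k => f k x) U := by
  have hderiv : ∀ m < n, ∀ x ∈ U, HasFDerivWithinAt (f m) ((f (m + 1) x).curryLeft) U x := by
    intro m hm x hx
    have hp : 1 < (n + ε - m : ℝ) := by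
      have : (m : ℝ) + 1 ≤ n := by exact_mod_cast hm
      linarith
    exact hasFDerivWithinAt_of_norm_lipRemainder_le f hm hM hp (hsymm (m + 1) hm x hx)
      (fun j hj => hlip.1 j j.zero_le hj x hx) (fun y hy => hlip.2 m m.zero_le hm.le y hy x hx)
  refine ⟨fun x _ => rfl, fun m hm x hx => hderiv m (by exact_mod_cast hm) x hx, fun m hm => ?_⟩
  rcases (show m ≤ n by exact_mod_cast hm).lt_or_eq with hm | rfl
  · exact fun x hx => (hderiv m hm x hx).continuousWithinAt
  · exact continuousOn_of_norm_sub_le_rpow hε (norm_sub_le_of_isLipCollBetween f hM hlip)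

theorem isLipCollBetween_of_hasFTaylorSeriesUpToOn {n : ℕ} {ε M : ℝ} (hε : 0 ≤ ε) (hM : 0 ≤ M)
    {U : Set E} (hU : Convex ℝ U) (hsymm : IsSymmColl n f U)
    (hT : HasFTaylorSeriesUpToOn n (fun x => f 0 x 0) (fun x k => f k x) U)
    (hbound : ∀ k ≤ n, ∀ x ∈ U, ‖f k x‖ ≤ M)
    (hHolder : ∀ x ∈ U, ∀ y ∈ U, ‖f n x - f n y‖ ≤ M * ‖x - y‖ ^ ε) :
    IsLipCollBetween (n + ε) 0 n M f U := by
  refine ⟨fun k _ hk x hx v => ((f k x).le_opNorm v).trans (by gcongr; exact hbound k hk x hx),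
    ?_⟩
  rintro k - hk
  induction hk using Nat.decreasingInduction with
  | self =>
    intro x hx y hy v
    calc ‖lipRemainder n f n x y v‖ = ‖(f n x - f n y) v‖ := by rw [lipRemainder_top, sub_apply]
      _ ≤ ‖f n x - f n y‖ * ∏ i, ‖v i‖ := (f n x - f n y).le_opNorm v
      _ ≤ M * ‖x - y‖ ^ (n + ε - n) * ∏ i, ‖v i‖ := by
        rw [add_sub_cancel_left]
        gcongr
        exact hHolder x hx y hy
  | of_succ k hk ih =>
    intro x hx y hy v
    have hexp : (n + ε - (k + 1 : ℕ) : ℝ) + 1 = n + ε - k := by push_cast; ring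
    have hp : 0 ≤ (n + ε - (k + 1 : ℕ) : ℝ) := by
      have : ((k + 1 : ℕ) : ℝ) ≤ n := by exact_mod_cast hk
      linarith
    rw [← hexp]
    exact norm_lipRemainder_le_of_succ f hk hU
      (fun z hz => hT.fderivWithin k (by exact_mod_cast hk) z hz) (hsymm (k + 1) hk) hM hp ih
      hx hy v

end

theorem statement1_general {E F : Type*} [NormedAddCommGroup E] [NormedSpace ℝ E]
    [NormedAddCommGroup F] [NormedSpace ℝ F]
    (n : ℕ) (ε : ℝ) (hε0 : 0 < ε) (M : ℝ) (hM : 0 ≤ M)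
    (U : Set E)
    (f : ∀ k : ℕ, E → ContinuousMultilinearMap ℝ (fun _ : Fin k => E) F)
    (hsymm : IsSymmColl n f U) :
    (IsOpen U →
      IsLipCollBetween (n + ε) 0 n M f U →
        (HasFTaylorSeriesUpToOn (n : ℕ) (fun x => f 0 x 0)
            (fun x k => f k x) U ∧
          (∀ k ≤ n, ∀ x ∈ U, ‖f k x‖ ≤ M) ∧
          (∀ x ∈ U, ∀ y ∈ U, ‖f n x - f n y‖ ≤ M * ‖x - y‖ ^ ε))) ∧
    (IsOpen U → Convex ℝ U →
      (IsLipCollBetween (n + ε) 0 n M f U ↔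
        (HasFTaylorSeriesUpToOn (n : ℕ) (fun x => f 0 x 0)
            (fun x k => f k x) U ∧
          (∀ k ≤ n, ∀ x ∈ U, ‖f k x‖ ≤ M) ∧
          (∀ x ∈ U, ∀ y ∈ U, ‖f n x - f n y‖ ≤ M * ‖x - y‖ ^ ε)))) := by
  have forward (hlip : IsLipCollBetween (n + ε) 0 n M f U) :=
    And.intro (hasFTaylorSeriesUpToOn_of_isLipCollBetween f hε0 hM hsymm hlip)
      (And.intro (norm_le_of_isLipCollBetween f hM hlip)
        (norm_sub_le_of_isLipCollBetween f hM hlip))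
  exact ⟨fun _ => forward, fun _ hU => ⟨forward, fun ⟨hT, hbound, hHolder⟩ =>
    isLipCollBetween_of_hasFTaylorSeriesUpToOn f hε0.le hM hU hsymm hT hbound hHolder⟩⟩

/-- **Characterisation of Lipschitz maps on open (convex) domains** (Theorem 2.3).
(A1): the collection `(f⁰,…,fⁿ)` is Lip-(n+ε) on `U` with norm at most `M`.
(A2): `f⁰` is `n` times differentiable on `U` with successive derivatives
`f¹,…,fⁿ` (expressed via `HasFTaylorSeriesUpToOn`), all of `‖f⁰‖_∞,…,‖fⁿ‖_∞`
are at most `M`, and `fⁿ` is `ε`-Hölder with constant `M`.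
If `U` is open then (A1) → (A2); if `U` is open and convex then (A1) ↔ (A2). -/
theorem statement1 {E F : Type*} [NormedAddCommGroup E] [NormedSpace ℝ E]
    [NormedAddCommGroup F] [NormedSpace ℝ F]
    (n : ℕ) (ε : ℝ) (hε0 : 0 < ε) (hε1 : ε ≤ 1) (M : ℝ) (hM : 0 ≤ M)
    (U : Set E)
    (f : ∀ k : ℕ, E → ContinuousMultilinearMap ℝ (fun _ : Fin k => E) F)
    (hsymm : IsSymmColl n f U) :
    (IsOpen U →
      IsLipCollBetween (n + ε) 0 n M f U →
        (HasFTaylorSeriesUpToOn (n : ℕ) (fun x => f 0 x 0)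
            (fun x k => f k x) U ∧
          (∀ k ≤ n, ∀ x ∈ U, ‖f k x‖ ≤ M) ∧
          (∀ x ∈ U, ∀ y ∈ U, ‖f n x - f n y‖ ≤ M * ‖x - y‖ ^ ε))) ∧
    (IsOpen U → Convex ℝ U →
      (IsLipCollBetween (n + ε) 0 n M f U ↔
        (HasFTaylorSeriesUpToOn (n : ℕ) (fun x => f 0 x 0)
            (fun x k => f k x) U ∧
          (∀ k ≤ n, ∀ x ∈ U, ‖f k x‖ ≤ M) ∧
          (∀ x ∈ U, ∀ y ∈ U, ‖f n x - f n y‖ ≤ M * ‖x - y‖ ^ ε)))) :=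
  statement1_general n ε hε0 M hM U f hsymm

end
end

section
/- Let γ ≥ γ' > 0. Then there exists a constant M_{γ,γ'} ≥ 0, depending only on γ and γ', such that for all normed vector spaces E and F, every subset U ⊆ E and every collection f = (f⁰, …, fⁿ) that is Lip-γ on U (with γ = n + ε), the truncated collection (f⁰, …, f^{n'}) (with γ' = n' + ε') is Lip-γ' on U and ‖(f⁰,…,f^{n'})‖_{Lip-γ'} ≤ M_{γ,γ'} · ‖f‖_{Lip-γ}. -/
open Metric Set

noncomputable section

/-!
Cutting the Taylor expansion at degree `n'` instead of `n` changes the remainder of order `k`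
by the Taylor terms of degrees `n' - k + 1, …, n - k`, each bounded by `M ‖x - y‖ ^ j`.
When `‖x - y‖ ≤ 1` these degrees all exceed `γ' - k`, and `‖x - y‖ ^ (γ - k) ≤ ‖x - y‖ ^ (γ' - k)`
controls the old remainder. When `‖x - y‖ ≥ 1` we bound the new remainder term by term
instead: its Taylor terms have degrees at most `n' - k ≤ γ' - k`, and `‖fᵏ(x)‖ ≤ M`.
-/

theorem prod_norm_append_const {E : Type*} [Norm E] {k j : ℕ} (v : Fin k → E) (w : E) :
    ∏ i, ‖Fin.append v (fun _ : Fin j => w) i‖ = (∏ i, ‖v i‖) * ‖w‖ ^ j := by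
  simp [Fin.prod_univ_add]

theorem norm_add_norm_sum_le {F ι : Type*} [SeminormedAddCommGroup F] {a : F} {g : ι → F}
    {s : Finset ι} {B : ℝ} {m : ℕ} (ha : ‖a‖ ≤ B) (hg : ∀ j ∈ s, ‖g j‖ ≤ B) (hs : s.card ≤ m) :
    ‖a‖ + ‖∑ j ∈ s, g j‖ ≤ (m + 1) * B := by
  have hB : 0 ≤ B := (norm_nonneg a).trans ha
  have hsum : ‖∑ j ∈ s, g j‖ ≤ m * B :=
    calc ‖∑ j ∈ s, g j‖ ≤ s.card • B := (norm_sum_le _ _).trans (s.sum_le_card_nsmul _ _ hg)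
      _ ≤ m * B := by rw [nsmul_eq_mul]; gcongr
  linarith

section Truncation

variable {E F : Type*} [NormedAddCommGroup E] [NormedSpace ℝ E]
  [NormedAddCommGroup F] [NormedSpace ℝ F]

def taylorTerm (f : ∀ k : ℕ, E → ContinuousMultilinearMap ℝ (fun _ : Fin k => E) F)
    (k : ℕ) (x y : E) (v : Fin k → E) (j : ℕ) : F :=
  ((j.factorial : ℝ)⁻¹) • f (k + j) y (Fin.append v fun _ : Fin j => x - y)

variable {f : ∀ k : ℕ, E → ContinuousMultilinearMap ℝ (fun _ : Fin k => E) F}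
  {n n' k j : ℕ} {x y : E} {v : Fin k → E}

theorem lipRemainder_eq_sub_sum_taylorTerm :
    lipRemainder n f k x y v = f k x v - ∑ j ∈ Finset.range (n - k + 1), taylorTerm f k x y v j :=
  rfl

theorem lipRemainder_eq_add_sum_Ico (hk : k ≤ n') (hn : n' ≤ n) :
    lipRemainder n' f k x y v = lipRemainder n f k x y v +
      ∑ j ∈ Finset.Ico (n' - k + 1) (n - k + 1), taylorTerm f k x y v j := by
  rw [lipRemainder_eq_sub_sum_taylorTerm, lipRemainder_eq_sub_sum_taylorTerm,
    ← Finset.sum_range_add_sum_Ico _ (by omega : n' - k + 1 ≤ n - k + 1)]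
  abel

theorem norm_taylorTerm_le {M : ℝ}
    (hf : ∀ w : Fin (k + j) → E, ‖f (k + j) y w‖ ≤ M * ∏ i, ‖w i‖) :
    ‖taylorTerm f k x y v j‖ ≤ M * (∏ i, ‖v i‖) * ‖x - y‖ ^ j := by
  have hfac : ‖((j.factorial : ℝ)⁻¹)‖ ≤ 1 := by
    rw [norm_inv, RCLike.norm_natCast]
    exact inv_le_one_of_one_le₀ (mod_cast j.factorial_pos)
  calc ‖taylorTerm f k x y v j‖
      ≤ 1 * ‖f (k + j) y (Fin.append v fun _ : Fin j => x - y)‖ := by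
        rw [taylorTerm, norm_smul]; gcongr
    _ ≤ M * (∏ i, ‖v i‖) * ‖x - y‖ ^ j := by
        rw [one_mul, mul_assoc, ← prod_norm_append_const]; exact hf _

variable {γ γ' M : ℝ} {k₀ : ℕ} {U : Set E}

theorem IsLipCollBetween.norm_lipRemainder_le_of_norm_sub_le_one
    (h : IsLipCollBetween γ k₀ n M f U) (hM : 0 ≤ M) (hγ : γ' ≤ γ) (hn : n' ≤ n)
    (hγ'_lo : (n' : ℝ) ≤ γ') (hγ'_hi : γ' ≤ n' + 1) (hk₀ : k₀ ≤ k) (hk : k ≤ n')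
    (hx : x ∈ U) (hy : y ∈ U) (hxy : ‖x - y‖ ≤ 1) :
    ‖lipRemainder n' f k x y v‖ ≤ (n + 2) * M * ‖x - y‖ ^ (γ' - k) * ∏ i, ‖v i‖ := by
  have he : 0 ≤ γ' - k := by
    have : (k : ℝ) ≤ n' := mod_cast hk
    linarith
  have hR : ‖lipRemainder n f k x y v‖ ≤ M * ‖x - y‖ ^ (γ' - k) * ∏ i, ‖v i‖ := by
    refine (h.2 k hk₀ (hk.trans hn) x hx y hy v).trans ?_
    gcongr M * ?_ * _
    exact Real.rpow_le_rpow_of_exponent_ge' (norm_nonneg _) hxy he (by linarith)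
  have hterm : ∀ j ∈ Finset.Ico (n' - k + 1) (n - k + 1),
      ‖taylorTerm f k x y v j‖ ≤ M * ‖x - y‖ ^ (γ' - k) * ∏ i, ‖v i‖ := by
    intro j hj
    rw [Finset.mem_Ico] at hj
    have hje : γ' - k ≤ j := by
      have : ((n' - k + 1 : ℕ) : ℝ) ≤ j := mod_cast hj.1
      push_cast [hk] at this
      linarith
    calc ‖taylorTerm f k x y v j‖ ≤ M * (∏ i, ‖v i‖) * ‖x - y‖ ^ j :=
          norm_taylorTerm_le (h.1 _ (by omega) (by omega) y hy)
      _ ≤ M * (∏ i, ‖v i‖) * ‖x - y‖ ^ (γ' - k) := by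
          rw [← Real.rpow_natCast]
          exact mul_le_mul_of_nonneg_left
            (Real.rpow_le_rpow_of_exponent_ge' (norm_nonneg _) hxy he hje) (by positivity)
      _ = M * ‖x - y‖ ^ (γ' - k) * ∏ i, ‖v i‖ := by ring
  calc ‖lipRemainder n' f k x y v‖
      ≤ ‖lipRemainder n f k x y v‖ + ‖∑ j ∈ Finset.Ico (n' - k + 1) (n - k + 1),
          taylorTerm f k x y v j‖ := by
        rw [lipRemainder_eq_add_sum_Ico hk hn]; exact norm_add_le _ _
    _ ≤ ((n + 1 : ℕ) + 1) * (M * ‖x - y‖ ^ (γ' - k) * ∏ i, ‖v i‖) :=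
        norm_add_norm_sum_le hR hterm (by rw [Nat.card_Ico]; omega)
    _ = (n + 2) * M * ‖x - y‖ ^ (γ' - k) * ∏ i, ‖v i‖ := by push_cast; ring

theorem IsLipCollBetween.norm_lipRemainder_le_of_one_le_norm_sub
    (h : IsLipCollBetween γ k₀ n M f U) (hM : 0 ≤ M) (hn : n' ≤ n)
    (hγ' : (n' : ℝ) ≤ γ') (hk₀ : k₀ ≤ k) (hk : k ≤ n')
    (hx : x ∈ U) (hy : y ∈ U) (hxy : 1 ≤ ‖x - y‖) :
    ‖lipRemainder n' f k x y v‖ ≤ (n + 2) * M * ‖x - y‖ ^ (γ' - k) * ∏ i, ‖v i‖ := by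
  have he : 0 ≤ γ' - k := by
    have : (k : ℝ) ≤ n' := mod_cast hk
    linarith
  have hfx : ‖f k x v‖ ≤ M * ‖x - y‖ ^ (γ' - k) * ∏ i, ‖v i‖ :=
    calc ‖f k x v‖ ≤ M * 1 * ∏ i, ‖v i‖ := by
          rw [mul_one]; exact h.1 k hk₀ (hk.trans hn) x hx v
      _ ≤ M * ‖x - y‖ ^ (γ' - k) * ∏ i, ‖v i‖ := by
          gcongr M * ?_ * _
          exact Real.one_le_rpow hxy he
  have hterm : ∀ j ∈ Finset.range (n' - k + 1),
      ‖taylorTerm f k x y v j‖ ≤ M * ‖x - y‖ ^ (γ' - k) * ∏ i, ‖v i‖ := by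
    intro j hj
    rw [Finset.mem_range] at hj
    have hje : (j : ℝ) ≤ γ' - k := by
      have : (j : ℝ) ≤ ((n' - k : ℕ) : ℝ) := mod_cast (by omega : j ≤ n' - k)
      push_cast [hk] at this
      linarith
    calc ‖taylorTerm f k x y v j‖ ≤ M * (∏ i, ‖v i‖) * ‖x - y‖ ^ j :=
          norm_taylorTerm_le (h.1 _ (by omega) (by omega) y hy)
      _ ≤ M * (∏ i, ‖v i‖) * ‖x - y‖ ^ (γ' - k) := by
          rw [← Real.rpow_natCast]
          exact mul_le_mul_of_nonneg_left (Real.rpow_le_rpow_of_exponent_le hxy hje) (by positivity)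
      _ = M * ‖x - y‖ ^ (γ' - k) * ∏ i, ‖v i‖ := by ring
  calc ‖lipRemainder n' f k x y v‖
      ≤ ‖f k x v‖ + ‖∑ j ∈ Finset.range (n' - k + 1), taylorTerm f k x y v j‖ :=
        norm_sub_le _ _
    _ ≤ ((n + 1 : ℕ) + 1) * (M * ‖x - y‖ ^ (γ' - k) * ∏ i, ‖v i‖) :=
        norm_add_norm_sum_le hfx hterm (by rw [Finset.card_range]; omega)
    _ = (n + 2) * M * ‖x - y‖ ^ (γ' - k) * ∏ i, ‖v i‖ := by push_cast; ring

theorem IsLipCollBetween.truncate (h : IsLipCollBetween γ k₀ n M f U) (hM : 0 ≤ M)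
    (hγ : γ' ≤ γ) (hn : n' ≤ n) (hγ'_lo : (n' : ℝ) ≤ γ') (hγ'_hi : γ' ≤ n' + 1) :
    IsLipCollBetween γ' k₀ n' ((n + 2) * M) f U := by
  refine ⟨fun k hk₀ hk x hx v => ?_, fun k hk₀ hk x hx y hy v => ?_⟩
  · calc ‖f k x v‖ ≤ M * ∏ i, ‖v i‖ := h.1 k hk₀ (hk.trans hn) x hx v
      _ ≤ (n + 2) * M * ∏ i, ‖v i‖ := by
          rw [mul_assoc]; exact le_mul_of_one_le_left (by positivity) (by linarith)
  · rcases le_total ‖x - y‖ 1 with hxy | hxy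
    · exact h.norm_lipRemainder_le_of_norm_sub_le_one hM hγ hn hγ'_lo hγ'_hi hk₀ hk hx hy hxy
    · exact h.norm_lipRemainder_le_of_one_le_norm_sub hM hn hγ'_lo hk₀ hk hx hy hxy

end Truncation

theorem statement2_general (γ γ' : ℝ) (n n' : ℕ) (ε ε' : ℝ)
    (hε1 : ε ≤ 1) (hε'0 : 0 < ε') (hε'1 : ε' ≤ 1)
    (hγ : γ = n + ε) (hγ' : γ' = n' + ε') (hle : γ' ≤ γ) :
    ∃ C : ℝ, 0 ≤ C ∧
      ∀ (E : Type*) (F : Type*) [NormedAddCommGroup E] [NormedSpace ℝ E]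
        [NormedAddCommGroup F] [NormedSpace ℝ F]
        (U : Set E) (M : ℝ), 0 ≤ M →
        ∀ (f : ∀ k : ℕ, E → ContinuousMultilinearMap ℝ (fun _ : Fin k => E) F),
        IsSymmColl n f U →
        IsLipCollBetween γ 0 n M f U →
        IsLipCollBetween γ' 0 n' (C * M) f U := by
  have hn : n' ≤ n := Nat.lt_succ_iff.mp (by exact_mod_cast (by linarith : (n' : ℝ) < n + 1))
  refine ⟨n + 2, by positivity, fun E F _ _ _ _ U M hM f _ hf => ?_⟩
  exact hf.truncate hM hle hn (by linarith) (by linarith)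

/-- **Embedding between Lipschitz spaces** (Theorem 2.4).
For `0 < γ' ≤ γ` there is a constant `C` depending only on `γ` and `γ'` such
that any Lip-γ collection `f = (f⁰,…,fⁿ)` on a subset `U` (with norm at most
`M`), truncated at level `n' = ⌈γ'⌉` , is Lip-γ' on `U` with norm at most `C·M`. -/
theorem statement2 (γ γ' : ℝ) (n n' : ℕ) (ε ε' : ℝ)
    (hε0 : 0 < ε) (hε1 : ε ≤ 1) (hε'0 : 0 < ε') (hε'1 : ε' ≤ 1)
    (hγ : γ = n + ε) (hγ' : γ' = n' + ε') (hle : γ' ≤ γ) :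
    ∃ C : ℝ, 0 ≤ C ∧
      ∀ (E : Type*) (F : Type*) [NormedAddCommGroup E] [NormedSpace ℝ E]
        [NormedAddCommGroup F] [NormedSpace ℝ F]
        (U : Set E) (M : ℝ), 0 ≤ M →
        ∀ (f : ∀ k : ℕ, E → ContinuousMultilinearMap ℝ (fun _ : Fin k => E) F),
        IsSymmColl n f U →
        IsLipCollBetween γ 0 n M f U →
        IsLipCollBetween γ' 0 n' (C * M) f U :=
  statement2_general γ γ' n n' ε ε' hε1 hε'0 hε'1 hγ hγ' hle

end
end

section
/- Let d ∈ ℕ*. The inverse of the homeomorphism F : ℝ^d → B_d(0,1), F(y) = y/√(1 + ‖y‖²), is given by F⁻¹(y) = y/√(1 − ‖y‖²) for y ∈ B_d(0,1). For every δ ∈ (0,1) and every γ > 0, the restriction of F⁻¹ to B_d(0,δ), together with its successive derivatives, is Lip-γ on B_d(0,δ); equivalently, for every n ∈ ℕ and 0 < ε ≤ 1, all iterated derivatives of F⁻¹ up to order n are bounded on B_d(0,δ) and the n-th derivative is ε-Hölder on B_d(0,δ). -/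
/-! Along the segment from `y` to `x`, the `j`-th derivative of `t ↦ Dᵏf(y + t(x - y))(v)`
is `D^{k+j}f(y + t(x - y))(v, x - y, …, x - y)`: each new direction may be moved behind `v`
because the iterated derivatives of an analytic function are symmetric. Taylor's theorem in one
variable then bounds the order-`k` remainder by `C‖x - y‖^{n+1-k}`, where `C` bounds `D^{n+1}f`
on a convex set `U`, and on a bounded `U` this is at most `C max(1, diam U) ‖x - y‖^{n+ε-k}`.
The map `F⁻¹` is analytic on the unit ball, and the bounds `C` for it come from compactness of
`closedBall 0 δ`. -/

open Metric Set

noncomputable section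

/-- The map `F(y) = y / √(1 + ‖y‖²)` from `ℝ^d` to the open Euclidean unit ball. -/
def ballMap (d : ℕ) (y : EuclideanSpace ℝ (Fin d)) : EuclideanSpace ℝ (Fin d) :=
  (Real.sqrt (1 + ‖y‖ ^ 2))⁻¹ • y

/-- The candidate inverse `y ↦ y / √(1 - ‖y‖²)`, defined on the open unit ball. -/
def ballMapInv (d : ℕ) (y : EuclideanSpace ℝ (Fin d)) : EuclideanSpace ℝ (Fin d) :=
  (Real.sqrt (1 - ‖y‖ ^ 2))⁻¹ • y

open scoped ContDiff

section

variable {E F : Type*} [NormedAddCommGroup E] [NormedSpace ℝ E]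
  [NormedAddCommGroup F] [NormedSpace ℝ F] {f : E → F} {s : Set E}

theorem hasDerivAt_iteratedFDerivWithin_comp_add_smul (hs : IsOpen s)
    (hf : ContDiffOn ℝ ω f s) {y h : E} {t : ℝ} (ht : y + t • h ∈ s) {m : ℕ} (w : Fin m → E) :
    HasDerivAt (fun τ : ℝ => iteratedFDerivWithin ℝ m f s (y + τ • h) w)
      (iteratedFDerivWithin ℝ (m + 1) f s (y + t • h) (Fin.snoc w h)) t := by
  have hderiv : HasFDerivAt (iteratedFDerivWithin ℝ m f s)
      (fderivWithin ℝ (iteratedFDerivWithin ℝ m f s) s (y + t • h)) (y + t • h) :=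
    ((hf.differentiableOn_iteratedFDerivWithin (WithTop.coe_lt_top _) hs.uniqueDiffOn) _
      ht).hasFDerivWithinAt.hasFDerivAt (hs.mem_nhds ht)
  have hline : HasDerivAt (fun τ : ℝ => y + τ • h) h t := by
    simpa using ((hasDerivAt_id t).smul_const h).const_add y
  refine ((ContinuousMultilinearMap.apply ℝ (fun _ : Fin m => E) F w).hasFDerivAt.comp_hasDerivAt
    t (hderiv.comp_hasDerivAt t hline)).congr_deriv ?_
  have hsymm : iteratedFDerivWithin ℝ (m + 1) f s (y + t • h) (Fin.snoc w h) =
      iteratedFDerivWithin ℝ (m + 1) f s (y + t • h) (Fin.cons h w) := by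
    rw [Fin.snoc_eq_cons_rotate]
    exact (hf _ ht).iteratedFDerivWithin_comp_perm hs.uniqueDiffOn ht (Fin.cons h w) _
  rw [hsymm, iteratedFDerivWithin_succ_apply_left]
  rfl

theorem iteratedDerivWithin_iteratedFDerivWithin_comp_add_smul (hs : IsOpen s)
    (hf : ContDiffOn ℝ ω f s) {J : Set ℝ} (hJ : UniqueDiffOn ℝ J) {y h : E}
    (hJs : ∀ t ∈ J, y + t • h ∈ s) {k : ℕ} (v : Fin k → E) (j : ℕ) :
    ∀ t ∈ J,
      iteratedDerivWithin j (fun τ : ℝ => iteratedFDerivWithin ℝ k f s (y + τ • h) v) J t =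
        iteratedFDerivWithin ℝ (k + j) f s (y + t • h) (Fin.append v fun _ : Fin j => h) := by
  induction j with
  | zero =>
    intro t _
    rw [iteratedDerivWithin_zero, Fin.append_right_nil _ _ rfl]
    rfl
  | succ j ih =>
    intro t ht
    have hsnoc : (Fin.append v fun _ : Fin (j + 1) => h) =
        Fin.snoc (Fin.append v fun _ : Fin j => h) h := by
      rw [← Fin.append_snoc]
      congr 1
      funext i
      refine Fin.lastCases ?_ (fun i => ?_) i <;> simp
    rw [iteratedDerivWithin_succ, derivWithin_congr ih (ih t ht), hsnoc]
    exact ((hasDerivAt_iteratedFDerivWithin_comp_add_smul hs hf (hJs t ht) _).hasDerivWithinAt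
      ).derivWithin (hJ t ht)

theorem contDiffOn_iteratedFDerivWithin_comp_add_smul (hs : IsOpen s)
    (hf : ContDiffOn ℝ ω f s) {J : Set ℝ} {y h : E} (hJs : ∀ t ∈ J, y + t • h ∈ s) {k : ℕ}
    (v : Fin k → E) :
    ContDiffOn ℝ ω (fun τ : ℝ => iteratedFDerivWithin ℝ k f s (y + τ • h) v) J := by
  have hk : ContDiffOn ℝ ω (iteratedFDerivWithin ℝ k f s) s := fun x hx =>
    (hf x hx).iteratedFDerivWithin_right hs.uniqueDiffOn (by simp) hx
  exact (ContinuousMultilinearMap.apply ℝ (fun _ : Fin k => E) F v).contDiff.comp_contDiffOn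
    (hk.comp (by fun_prop) hJs)

theorem norm_lipRemainder_iteratedFDerivWithin_le (hs : IsOpen s) (hf : ContDiffOn ℝ ω f s)
    {x y : E} (hxy : segment ℝ y x ⊆ s) {k m : ℕ} {C : ℝ}
    (hC : ∀ z ∈ segment ℝ y x, ‖iteratedFDerivWithin ℝ (k + m + 1) f s z‖ ≤ C) (v : Fin k → E) :
    ‖lipRemainder (k + m) (fun j => iteratedFDerivWithin ℝ j f s) k x y v‖ ≤
      C * ‖x - y‖ ^ (m + 1) * ∏ i, ‖v i‖ := by
  set g := fun τ : ℝ => iteratedFDerivWithin ℝ k f s (y + τ • (x - y)) v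
  have hseg : ∀ t ∈ Icc (0 : ℝ) 1, y + t • (x - y) ∈ segment ℝ y x := fun t ht => by
    rw [segment_eq_image']
    exact mem_image_of_mem _ ht
  have hJs : ∀ t ∈ Icc (0 : ℝ) 1, y + t • (x - y) ∈ s := fun t ht => hxy (hseg t ht)
  have hg := iteratedDerivWithin_iteratedFDerivWithin_comp_add_smul hs hf
    (uniqueDiffOn_Icc zero_lt_one) hJs v
  have hC0 : 0 ≤ C := (norm_nonneg _).trans (hC y (left_mem_segment ℝ y x))
  have hbound : ∀ t ∈ Icc (0 : ℝ) 1,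
      ‖iteratedDerivWithin (m + 1) g (Icc 0 1) t‖ ≤ C * ((∏ i, ‖v i‖) * ‖x - y‖ ^ (m + 1)) := by
    intro t ht
    rw [hg (m + 1) t ht]
    refine ((iteratedFDerivWithin ℝ (k + (m + 1)) f s _).le_opNorm _).trans ?_
    rw [Fin.prod_univ_add (a := k) (b := m + 1)]
    simp only [Fin.append_left, Fin.append_right, Finset.prod_const, Finset.card_univ,
      Fintype.card_fin]
    gcongr
    exact hC _ (hseg t ht)
  have htaylor := taylor_mean_remainder_bound zero_le_one
    ((contDiffOn_iteratedFDerivWithin_comp_add_smul hs hf hJs v).of_le le_top)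
    (right_mem_Icc.2 zero_le_one) hbound
  have hpoly : taylorWithinEval g m (Icc 0 1) 0 1 = ∑ j ∈ Finset.range (m + 1),
      ((j.factorial : ℝ)⁻¹) • iteratedFDerivWithin ℝ (k + j) f s y
        (Fin.append v fun _ : Fin j => x - y) := by
    rw [taylor_within_apply]
    refine Finset.sum_congr rfl fun j _ => ?_
    rw [hg j 0 (left_mem_Icc.2 zero_le_one)]
    simp
  rw [lipRemainder, Nat.add_sub_cancel_left, ← hpoly]
  simp only [one_smul, add_sub_cancel, sub_zero, one_pow, mul_one] at htaylor
  refine htaylor.trans ?_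
  calc C * ((∏ i, ‖v i‖) * ‖x - y‖ ^ (m + 1)) / m.factorial
      ≤ C * ((∏ i, ‖v i‖) * ‖x - y‖ ^ (m + 1)) :=
        div_le_self (by positivity) (Nat.one_le_cast.2 m.factorial_pos)
    _ = C * ‖x - y‖ ^ (m + 1) * ∏ i, ‖v i‖ := by ring

theorem rpow_le_max_one_mul_rpow {r R a b : ℝ} (hr : 0 ≤ r) (hrR : r ≤ R) (ha : 0 < a)
    (hab : a ≤ b) (hba : b ≤ a + 1) : r ^ b ≤ max 1 R * r ^ a := by
  rcases hr.eq_or_lt with rfl | hr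
  · rw [Real.zero_rpow (by linarith), Real.zero_rpow ha.ne', mul_zero]
  calc r ^ b = r ^ (b - a) * r ^ a := by rw [← Real.rpow_add hr, sub_add_cancel]
    _ ≤ max 1 R ^ (b - a) * r ^ a := by
        gcongr
        exact le_max_of_le_right hrR
    _ ≤ max 1 R ^ (1 : ℝ) * r ^ a := by
        gcongr
        exacts [le_max_left _ _, by linarith]
    _ = max 1 R * r ^ a := by rw [Real.rpow_one]

theorem isLipCollBetween_iteratedFDerivWithin (hs : IsOpen s) (hf : ContDiffOn ℝ ω f s)
    {U : Set E} (hUs : U ⊆ s) (hU : Convex ℝ U) (hUb : Bornology.IsBounded U) {n : ℕ}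
    {ε C : ℝ} (hε0 : 0 < ε) (hε1 : ε ≤ 1)
    (hC : ∀ k ≤ n + 1, ∀ x ∈ U, ‖iteratedFDerivWithin ℝ k f s x‖ ≤ C) :
    IsLipCollBetween (n + ε) 0 n (C * max 1 (diam U))
      (fun k => iteratedFDerivWithin ℝ k f s) U := by
  have hC0 : ∀ x ∈ U, 0 ≤ C := fun x hx => (norm_nonneg _).trans (hC 0 (Nat.zero_le _) x hx)
  refine ⟨fun k _ hk x hx v => ?_, fun k _ hk x hx y hy v => ?_⟩
  · calc ‖iteratedFDerivWithin ℝ k f s x v‖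
        ≤ ‖iteratedFDerivWithin ℝ k f s x‖ * ∏ i, ‖v i‖ :=
          (iteratedFDerivWithin ℝ k f s x).le_opNorm v
      _ ≤ C * ∏ i, ‖v i‖ := by gcongr; exact hC k (by omega) x hx
      _ ≤ C * max 1 (diam U) * ∏ i, ‖v i‖ := by
          gcongr
          exact le_mul_of_one_le_right (hC0 x hx) (le_max_left _ _)
  · have := hC0 x hx
    obtain ⟨m, rfl⟩ := Nat.exists_eq_add_of_le hk
    have hseg := hU.segment_subset hy hx
    have hpow : ‖x - y‖ ^ (m + 1) ≤
        max 1 (diam U) * ‖x - y‖ ^ (((k + m : ℕ) : ℝ) + ε - k) := by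
      rw [← Real.rpow_natCast]
      refine rpow_le_max_one_mul_rpow (norm_nonneg _) ?_ ?_ ?_ ?_
      · rw [← dist_eq_norm]
        exact dist_le_diam_of_mem hUb hx hy
      all_goals push_cast; linarith
    calc _ ≤ C * ‖x - y‖ ^ (m + 1) * ∏ i, ‖v i‖ :=
          norm_lipRemainder_iteratedFDerivWithin_le hs hf (hseg.trans hUs)
            (fun z hz => hC _ le_rfl z (hseg hz)) v
      _ ≤ C * (max 1 (diam U) * ‖x - y‖ ^ (((k + m : ℕ) : ℝ) + ε - k)) * ∏ i, ‖v i‖ := by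
          gcongr
      _ = _ := by ring

end

theorem IsCompact.exists_bound_iteratedFDerivWithin {𝕜 E F : Type*}
    [NontriviallyNormedField 𝕜] [NormedAddCommGroup E] [NormedSpace 𝕜 E]
    [NormedAddCommGroup F] [NormedSpace 𝕜 F]
    {f : E → F} {s K : Set E} (hK : IsCompact K) (hKs : K ⊆ s) (hs : UniqueDiffOn 𝕜 s) {N : ℕ}
    (hf : ContDiffOn 𝕜 N f s) :
    ∃ C, 0 ≤ C ∧ ∀ k ≤ N, ∀ x ∈ K, ‖iteratedFDerivWithin 𝕜 k f s x‖ ≤ C := by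
  have hbound : ∀ k ∈ Iic N, ∀ᶠ C in Filter.atTop, ∀ x ∈ K,
      ‖iteratedFDerivWithin 𝕜 k f s x‖ ≤ C := fun k hk => by
    obtain ⟨C, hC⟩ := hK.exists_bound_of_continuousOn
      ((hf.continuousOn_iteratedFDerivWithin (by exact_mod_cast hk) hs).mono hKs)
    filter_upwards [Filter.eventually_ge_atTop C] with C' hC' x hx using (hC x hx).trans hC'
  exact ((Filter.eventually_ge_atTop 0).and ((finite_Iic N).eventually_all.2 hbound)).exists

theorem inv_sqrt_smul_inv_sqrt_smul {E : Type*} [AddCommGroup E] [Module ℝ E] {a b : ℝ}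
    (ha : 0 < a) (hb : b = a⁻¹) (y : E) : (√b)⁻¹ • (√a)⁻¹ • y = y := by
  rw [hb, Real.sqrt_inv, inv_inv, smul_smul, mul_inv_cancel₀ (Real.sqrt_pos.2 ha).ne',
    one_smul]

theorem norm_inv_sqrt_smul_sq {E : Type*} [NormedAddCommGroup E] [NormedSpace ℝ E] {a : ℝ}
    (ha : 0 ≤ a) (y : E) : ‖(√a)⁻¹ • y‖ ^ 2 = ‖y‖ ^ 2 / a := by
  rw [norm_smul, Real.norm_eq_abs, abs_of_nonneg (by positivity), mul_pow, inv_pow,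
    Real.sq_sqrt ha, inv_mul_eq_div]

theorem one_sub_norm_sq_pos {E : Type*} [SeminormedAddCommGroup E] {y : E}
    (hy : y ∈ ball 0 1) : 0 < 1 - ‖y‖ ^ 2 := by
  have := mem_ball_zero_iff.1 hy
  nlinarith [norm_nonneg y]

theorem ballMapInv_ballMap (d : ℕ) (y : EuclideanSpace ℝ (Fin d)) :
    ballMapInv d (ballMap d y) = y := by
  have hpos : (0 : ℝ) < 1 + ‖y‖ ^ 2 := by positivity
  refine inv_sqrt_smul_inv_sqrt_smul hpos ?_ y
  rw [ballMap, norm_inv_sqrt_smul_sq hpos.le]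
  field_simp
  ring

theorem ballMap_ballMapInv (d : ℕ) {y : EuclideanSpace ℝ (Fin d)} (hy : y ∈ ball 0 1) :
    ballMap d (ballMapInv d y) = y := by
  have hpos := one_sub_norm_sq_pos hy
  refine inv_sqrt_smul_inv_sqrt_smul hpos ?_ y
  rw [ballMapInv, norm_inv_sqrt_smul_sq hpos.le]
  field_simp
  ring

theorem contDiffOn_ballMapInv (d : ℕ) : ContDiffOn ℝ ω (ballMapInv d) (ball 0 1) := by
  intro y hy
  have hpos := one_sub_norm_sq_pos hy
  have hsqrt : ContDiffAt ℝ ω (fun z : EuclideanSpace ℝ (Fin d) => √(1 - ‖z‖ ^ 2)) y :=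
    (Real.contDiffAt_sqrt hpos.ne').comp y (contDiff_const.sub (contDiff_norm_sq ℝ)).contDiffAt
  exact ((hsqrt.inv (Real.sqrt_pos.2 hpos).ne').smul contDiffAt_id).contDiffWithinAt

theorem statement4_general (d : ℕ) :
    (∀ y : EuclideanSpace ℝ (Fin d), ballMapInv d (ballMap d y) = y) ∧
    (∀ y ∈ Metric.ball (0 : EuclideanSpace ℝ (Fin d)) 1,
        ballMap d (ballMapInv d y) = y) ∧
    (∀ δ : ℝ, 0 < δ → δ < 1 →
      ∀ (n : ℕ) (ε : ℝ), 0 < ε → ε ≤ 1 →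
        ∃ M : ℝ, 0 ≤ M ∧
          IsLipCollBetween (n + ε) 0 n M
            (fun k x =>
              iteratedFDerivWithin ℝ k (ballMapInv d)
                (Metric.ball (0 : EuclideanSpace ℝ (Fin d)) 1) x)
            (Metric.ball (0 : EuclideanSpace ℝ (Fin d)) δ)) := by
  refine ⟨ballMapInv_ballMap d, fun y hy => ballMap_ballMapInv d hy, ?_⟩
  intro δ _ hδ1 n ε hε0 hε1
  obtain ⟨C, hC0, hC⟩ := (isCompact_closedBall (0 : EuclideanSpace ℝ (Fin d)) δ
    ).exists_bound_iteratedFDerivWithin (closedBall_subset_ball hδ1) isOpen_ball.uniqueDiffOn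
      (N := n + 1) ((contDiffOn_ballMapInv d).of_le le_top)
  exact ⟨C * max 1 (diam (ball 0 δ)), by positivity,
    isLipCollBetween_iteratedFDerivWithin isOpen_ball (contDiffOn_ballMapInv d)
      (ball_subset_ball hδ1.le) (convex_ball 0 δ) isBounded_ball hε0 hε1
      fun k hk x hx => hC k hk x (ball_subset_closedBall hx)⟩

/-- **The inverse of the ball map and its Lipschitz regularity** (Lemma 2.5, second part).
`y ↦ y/√(1-‖y‖²)` is the inverse of `F(y) = y/√(1+‖y‖²)`, and for every
`δ ∈ (0,1)` and every `γ = n + ε > 0` the collection of `F⁻¹` together with its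
iterated derivatives (taken within the unit ball) is Lip-γ on `B_d(0,δ)`:
all these derivatives are bounded on `B_d(0,δ)` and the `n`-th one is `ε`-Hölder
there. -/
theorem statement4 (d : ℕ) (hd : 0 < d) :
    (∀ y : EuclideanSpace ℝ (Fin d), ballMapInv d (ballMap d y) = y) ∧
    (∀ y ∈ Metric.ball (0 : EuclideanSpace ℝ (Fin d)) 1,
        ballMap d (ballMapInv d y) = y) ∧
    (∀ δ : ℝ, 0 < δ → δ < 1 →
      ∀ (n : ℕ) (ε : ℝ), 0 < ε → ε ≤ 1 →
        ∃ M : ℝ, 0 ≤ M ∧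
          IsLipCollBetween (n + ε) 0 n M
            (fun k x =>
              iteratedFDerivWithin ℝ k (ballMapInv d)
                (Metric.ball (0 : EuclideanSpace ℝ (Fin d)) 1) x)
            (Metric.ball (0 : EuclideanSpace ℝ (Fin d)) δ)) :=
  statement4_general d

end
end

section
/- Let γ > 0 and let E, F, G be normed vector spaces. (1) If U ⊆ E, f : U → F is a Lip-γ map (with collection (f⁰,…,fⁿ)) and u : F → G is a bounded linear map, then the collection (u∘f⁰, u∘f¹, …, u∘fⁿ) is Lip-γ on U and ‖u ∘ f‖_{Lip-γ} ≤ ‖u‖ · ‖f‖_{Lip-γ}. (2) If v : E → F is a bounded linear map and g : F → G is a Lip-γ map on F (with collection (g⁰,…,gⁿ)), then g ∘ v, with k-th collection term x ↦ gᵏ(v(x)) ∘ v^{⊗k}, is Lip-γ on E and ‖g ∘ v‖_{Lip-γ} ≤ ‖g‖_{Lip-γ} · max(1, ‖v‖^γ). -/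
open Metric Set

noncomputable section

/-- **Composition with bounded linear maps** (Proposition 2.9).
(1) If `f = (f⁰,…,fⁿ)` is Lip-γ on `U ⊆ E` with constant `M` and `u : F → G` is a
bounded linear map, then `(u∘f⁰, u∘f¹, …, u∘fⁿ)` is Lip-γ on `U` with constant
`‖u‖·M`.
(2) If `v : E → F` is a bounded linear map and `g = (g⁰,…,gⁿ)` is Lip-γ on `F`
with constant `M`, then `g ∘ v`, with `k`-th term `x ↦ gᵏ(v x) ∘ v^{⊗k}`, is
Lip-γ on `E` with constant `M · max(1, ‖v‖^γ)`. -/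
theorem statement7 {E F G : Type*}
    [NormedAddCommGroup E] [NormedSpace ℝ E]
    [NormedAddCommGroup F] [NormedSpace ℝ F]
    [NormedAddCommGroup G] [NormedSpace ℝ G]
    (γ : ℝ) (n : ℕ) (ε : ℝ) (hε0 : 0 < ε) (hε1 : ε ≤ 1) (hγ : γ = n + ε) :
    (∀ (U : Set E) (M : ℝ), 0 ≤ M →
      ∀ (f : ∀ k : ℕ, E → ContinuousMultilinearMap ℝ (fun _ : Fin k => E) F),
        IsSymmColl n f U →
        IsLipCollBetween γ 0 n M f U →
        ∀ u : F →L[ℝ] G,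
          IsLipCollBetween γ 0 n (‖u‖ * M)
            (fun k x => u.compContinuousMultilinearMap (f k x)) U) ∧
    (∀ (M : ℝ), 0 ≤ M →
      ∀ (g : ∀ k : ℕ, F → ContinuousMultilinearMap ℝ (fun _ : Fin k => F) G),
        IsSymmColl n g (Set.univ : Set F) →
        IsLipCollBetween γ 0 n M g (Set.univ : Set F) →
        ∀ v : E →L[ℝ] F,
          IsLipCollBetween γ 0 n (M * max 1 (‖v‖ ^ γ))
            (fun k x => (g k (v x)).compContinuousLinearMap (fun _ : Fin k => v))
            (Set.univ : Set E)) := by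
  have hγ0 : 0 < γ := by rw [hγ]; positivity
  have hγk : ∀ k : ℕ, k ≤ n → 0 ≤ γ - k := fun k hk => by
    have : (k : ℝ) ≤ n := by exact_mod_cast hk
    rw [hγ]; linarith
  constructor
  · rintro U M hM f _ ⟨hb, hr⟩ u
    constructor
    · intro k _ hkn x hx w
      calc ‖u (f k x w)‖ ≤ ‖u‖ * ‖f k x w‖ := u.le_opNorm _
        _ ≤ ‖u‖ * (M * ∏ i, ‖w i‖) :=
            mul_le_mul_of_nonneg_left (hb k (Nat.zero_le _) hkn x hx w) (norm_nonneg u)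
        _ = ‖u‖ * M * ∏ i, ‖w i‖ := by ring
    · intro k _ hkn x hx y hy w
      have key : lipRemainder n (fun k x => u.compContinuousMultilinearMap (f k x)) k x y w
          = u (lipRemainder n f k x y w) := by
        simp [lipRemainder, map_sub, map_sum, map_smul]
      rw [key]
      calc ‖u (lipRemainder n f k x y w)‖ ≤ ‖u‖ * ‖lipRemainder n f k x y w‖ :=
            u.le_opNorm _
        _ ≤ ‖u‖ * (M * ‖x - y‖ ^ (γ - k) * ∏ i, ‖w i‖) :=
            mul_le_mul_of_nonneg_left (hr k (Nat.zero_le _) hkn x hx y hy w) (norm_nonneg u)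
        _ = ‖u‖ * M * ‖x - y‖ ^ (γ - k) * ∏ i, ‖w i‖ := by ring
  · rintro M hM g _ ⟨hb, hr⟩ v
    have hmax : ∀ k : ℕ, k ≤ n → ‖v‖ ^ k ≤ max 1 (‖v‖ ^ γ) := by
      intro k hk
      rcases le_total ‖v‖ 1 with h | h
      · exact le_max_of_le_left (pow_le_one₀ (norm_nonneg _) h)
      · refine le_max_of_le_right ?_
        rw [← Real.rpow_natCast ‖v‖ k]
        refine Real.rpow_le_rpow_of_exponent_le h ?_
        have : (k : ℝ) ≤ n := by exact_mod_cast hk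
        rw [hγ]; linarith
    constructor
    · intro k _ hkn x _ w
      simp only [ContinuousMultilinearMap.compContinuousLinearMap_apply]
      calc ‖g k (v x) fun i => v (w i)‖ ≤ M * ∏ i, ‖v (w i)‖ :=
            hb k (Nat.zero_le _) hkn _ trivial _
        _ ≤ M * ∏ i, (‖v‖ * ‖w i‖) :=
            mul_le_mul_of_nonneg_left (Finset.prod_le_prod (fun i _ => norm_nonneg _)
              (fun i _ => v.le_opNorm _)) hM
        _ = M * (‖v‖ ^ k * ∏ i, ‖w i‖) := by
            rw [Finset.prod_mul_distrib, Finset.prod_const, Finset.card_univ,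
              Fintype.card_fin]
        _ ≤ M * (max 1 (‖v‖ ^ γ) * ∏ i, ‖w i‖) :=
            mul_le_mul_of_nonneg_left (mul_le_mul_of_nonneg_right (hmax k hkn)
              (Finset.prod_nonneg fun i _ => norm_nonneg _)) hM
        _ = M * max 1 (‖v‖ ^ γ) * ∏ i, ‖w i‖ := by ring
    · intro k _ hkn x _ y _ w
      have happ : ∀ j : ℕ, (fun i : Fin (k + j) => v (Fin.append w (fun _ : Fin j => x - y) i))
          = Fin.append (fun i => v (w i)) (fun _ : Fin j => v x - v y) := by
        intro j; funext i
        refine Fin.addCases (fun i => ?_) (fun i => ?_) i <;>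
          simp [Fin.append_left, Fin.append_right, map_sub]
      have key : lipRemainder n
            (fun k x => (g k (v x)).compContinuousLinearMap (fun _ : Fin k => v)) k x y w
          = lipRemainder n g k (v x) (v y) (fun i => v (w i)) := by
        simp only [lipRemainder, ContinuousMultilinearMap.compContinuousLinearMap_apply]
        congr 1
        refine Finset.sum_congr rfl fun j _ => ?_
        rw [happ j]
      rw [key]
      have hvxy : ‖v x - v y‖ ≤ ‖v‖ * ‖x - y‖ := by
        rw [← map_sub]; exact v.le_opNorm _
      have hγk' := hγk k hkn
      calc ‖lipRemainder n g k (v x) (v y) fun i => v (w i)‖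
          ≤ M * ‖v x - v y‖ ^ (γ - k) * ∏ i, ‖v (w i)‖ :=
            hr k (Nat.zero_le _) hkn _ trivial _ trivial _
        _ ≤ M * (‖v‖ * ‖x - y‖) ^ (γ - k) * ∏ i, (‖v‖ * ‖w i‖) :=
            mul_le_mul
              (mul_le_mul_of_nonneg_left
                (Real.rpow_le_rpow (norm_nonneg _) hvxy hγk') hM)
              (Finset.prod_le_prod (fun i _ => norm_nonneg _)
                (fun i _ => v.le_opNorm _))
              (Finset.prod_nonneg fun i _ => norm_nonneg _)
              (by positivity)
        _ = M * (‖v‖ ^ (γ - k) * ‖v‖ ^ k) * ‖x - y‖ ^ (γ - k) * ∏ i, ‖w i‖ := by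
            rw [Real.mul_rpow (norm_nonneg _) (norm_nonneg _), Finset.prod_mul_distrib,
              Finset.prod_const, Finset.card_univ, Fintype.card_fin]
            ring
        _ = M * ‖v‖ ^ γ * ‖x - y‖ ^ (γ - k) * ∏ i, ‖w i‖ := by
            rw [← Real.rpow_natCast ‖v‖ k, ← Real.rpow_add' (norm_nonneg _)
              (by rw [sub_add_cancel]; exact ne_of_gt hγ0), sub_add_cancel]
        _ ≤ M * max 1 (‖v‖ ^ γ) * ‖x - y‖ ^ (γ - k) * ∏ i, ‖w i‖ :=
            mul_le_mul_of_nonneg_right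
              (mul_le_mul_of_nonneg_right
                (mul_le_mul_of_nonneg_left (le_max_right _ _) hM)
                (Real.rpow_nonneg (norm_nonneg _) _))
              (Finset.prod_nonneg fun i _ => norm_nonneg _)

end
end

section
/- Let γ > 0. Then there exists a constant C_γ ≥ 0, depending only on γ, with the following property: for all normed vector spaces E, F, G, H, every subset U ⊆ E, all Lip-γ maps f : U → F and g : U → G, and every continuous bilinear map B : F × G → H, the map B(f,g) : U → H, x ↦ B(f⁰(x), g⁰(x)), with higher collection terms given by the Leibniz rule applied to the collections of f and g, is Lip-γ on U and ‖B(f,g)‖_{Lip-γ} ≤ C_γ · ‖B‖ · ‖f‖_{Lip-γ} · ‖g‖_{Lip-γ}. -/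
open Metric Set

noncomputable section

namespace Aux8


lemma famCast {E F : Type*} [NormedAddCommGroup E] [NormedSpace ℝ E]
    [NormedAddCommGroup F] [NormedSpace ℝ F]
    (f : ∀ k : ℕ, E → ContinuousMultilinearMap ℝ (fun _ : Fin k => E) F) (x : E)
    {m m' : ℕ} (h : m = m') (u : Fin m' → E) :
    f m x (fun i => u (Fin.cast h i)) = f m' x u := by subst h; rfl

lemma prodEmb {k : ℕ} (s : Finset (Fin k)) (F : Fin k → ℝ) :
    ∏ i : Fin s.card, F (s.orderEmbOfFin rfl i) = ∏ i ∈ s, F i := by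
  apply Finset.prod_bij (fun i _ => s.orderEmbOfFin rfl i)
  · intro a _; exact s.orderEmbOfFin_mem rfl a
  · intro a _ b _ hab; exact (s.orderEmbOfFin rfl).injective hab
  · intro b hb
    have : b ∈ Set.range (s.orderEmbOfFin rfl) := by
      rw [s.range_orderEmbOfFin rfl]; exact hb
    obtain ⟨i, hi⟩ := this
    exact ⟨i, Finset.mem_univ i, hi⟩
  · intro a _; rfl

lemma triangle_reindex {M : Type*} [AddCommMonoid M] (N : ℕ) (f : ℕ → ℕ → M) :
    ∑ j ∈ Finset.range (N+1), ∑ p ∈ Finset.range (j+1), f p (j-p)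
    = ∑ pq ∈ (Finset.range (N+1) ×ˢ Finset.range (N+1)).filter (fun pq => pq.1+pq.2 ≤ N),
        f pq.1 pq.2 := by
  rw [Finset.sum_sigma']
  refine Finset.sum_nbij' (fun x => (x.2, x.1 - x.2)) (fun pq => ⟨pq.1 + pq.2, pq.1⟩) ?_ ?_ ?_ ?_ ?_
  · rintro ⟨j, p⟩ hx
    simp only [Finset.mem_sigma, Finset.mem_range] at hx
    simp only [Finset.mem_filter, Finset.mem_product, Finset.mem_range]
    omega
  · rintro ⟨p, q⟩ hx
    simp only [Finset.mem_filter, Finset.mem_product, Finset.mem_range] at hx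
    simp only [Finset.mem_sigma, Finset.mem_range]
    omega
  · rintro ⟨j, p⟩ hx
    simp only [Finset.mem_sigma, Finset.mem_range] at hx
    have h1 : p + (j - p) = j := by omega
    simp [h1]
  · rintro ⟨p, q⟩ hx; simp
  · rintro ⟨j, p⟩ hx; rfl

variable {k j : ℕ}

def joinSet (s : Finset (Fin k)) (r : Finset (Fin j)) : Finset (Fin (k+j)) :=
  s.map (Fin.castAddEmb j) ∪ r.map (Fin.natAddEmb k)

lemma mem_join_castAdd (s : Finset (Fin k)) (r : Finset (Fin j)) (i : Fin k) :
    Fin.castAdd j i ∈ joinSet s r ↔ i ∈ s := by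
  simp only [joinSet, Finset.mem_union, Finset.mem_map, Fin.castAddEmb_apply,
    Fin.natAddEmb_apply]
  constructor
  · rintro (⟨a, ha, hae⟩ | ⟨a, ha, hae⟩)
    · obtain rfl : a = i := Fin.castAdd_injective _ _ hae
      exact ha
    · exfalso; have := i.isLt
      simp only [Fin.ext_iff, Fin.coe_castAdd, Fin.coe_natAdd, Fin.coe_castLE] at hae
      omega
  · intro h; exact Or.inl ⟨i, h, rfl⟩

lemma mem_join_natAdd (s : Finset (Fin k)) (r : Finset (Fin j)) (i : Fin j) :
    Fin.natAdd k i ∈ joinSet s r ↔ i ∈ r := by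
  simp only [joinSet, Finset.mem_union, Finset.mem_map, Fin.castAddEmb_apply,
    Fin.natAddEmb_apply]
  constructor
  · rintro (⟨a, ha, hae⟩ | ⟨a, ha, hae⟩)
    · exfalso; have := a.isLt
      simp only [Fin.ext_iff, Fin.coe_castAdd, Fin.coe_natAdd, Fin.coe_castLE,
        Fin.castAddEmb_apply, Fin.natAddEmb_apply] at hae
      omega
    · obtain rfl : a = i := by
        have := congrArg Fin.val hae
        simp only [Fin.coe_natAdd] at this
        exact Fin.ext (by omega)
      exact ha
  · intro h; exact Or.inr ⟨i, h, rfl⟩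

lemma card_joinSet (s : Finset (Fin k)) (r : Finset (Fin j)) :
    (joinSet s r).card = s.card + r.card := by
  rw [joinSet, Finset.card_union_of_disjoint, Finset.card_map, Finset.card_map]
  rw [Finset.disjoint_left]
  rintro z hz hz'
  simp only [Finset.mem_map, Fin.castAddEmb_apply, Fin.natAddEmb_apply] at hz hz'
  obtain ⟨a, _, rfl⟩ := hz
  obtain ⟨b, _, hb⟩ := hz'
  have := a.isLt
  simp only [Fin.ext_iff, Fin.coe_castAdd, Fin.coe_natAdd, Fin.coe_castLE,
    Fin.castAddEmb_apply, Fin.natAddEmb_apply] at hb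
  omega

lemma compl_joinSet (s : Finset (Fin k)) (r : Finset (Fin j)) :
    (joinSet s r)ᶜ = joinSet sᶜ rᶜ := by
  ext z
  refine Fin.addCases (fun i => ?_) (fun i => ?_) z
  · simp [mem_join_castAdd]
  · simp [mem_join_natAdd]

lemma joinSet_split (t : Finset (Fin (k+j))) :
    joinSet (Finset.univ.filter (fun i : Fin k => Fin.castAdd j i ∈ t))
      (Finset.univ.filter (fun i : Fin j => Fin.natAdd k i ∈ t)) = t := by
  ext z
  refine Fin.addCases (fun i => ?_) (fun i => ?_) z
  · simp [mem_join_castAdd]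
  · simp [mem_join_natAdd]

lemma splitLeft_join (s : Finset (Fin k)) (r : Finset (Fin j)) :
    Finset.univ.filter (fun i : Fin k => Fin.castAdd j i ∈ joinSet s r) = s := by
  ext i; simp [mem_join_castAdd]

lemma splitRight_join (s : Finset (Fin k)) (r : Finset (Fin j)) :
    Finset.univ.filter (fun i : Fin j => Fin.natAdd k i ∈ joinSet s r) = r := by
  ext i; simp [mem_join_natAdd]

lemma sum_finset_split {M : Type*} [AddCommMonoid M] (Φ : Finset (Fin (k+j)) → M) :
    ∑ t : Finset (Fin (k+j)), Φ t
      = ∑ s : Finset (Fin k), ∑ r : Finset (Fin j), Φ (joinSet s r) := by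
  rw [← Finset.sum_product']
  refine (Finset.sum_nbij' (fun t => (Finset.univ.filter (fun i : Fin k => Fin.castAdd j i ∈ t),
      Finset.univ.filter (fun i : Fin j => Fin.natAdd k i ∈ t)))
      (fun p => joinSet p.1 p.2) (fun _ _ => Finset.mem_univ _) (fun _ _ => Finset.mem_univ _)
      ?_ ?_ ?_)
  · intro t _; exact joinSet_split t
  · rintro ⟨s, r⟩ _
    simp only [Prod.mk.injEq]
    exact ⟨splitLeft_join s r, splitRight_join s r⟩
  · intro t _; rw [joinSet_split]

lemma strictMono_append {a b N : ℕ} {f : Fin a → Fin N} {g : Fin b → Fin N}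
    (hf : StrictMono f) (hg : StrictMono g) (hfg : ∀ i j, f i < g j) :
    StrictMono (Fin.append f g) := by
  intro i i'
  refine Fin.addCases (fun i1 => ?_) (fun i1 => ?_) i <;>
      refine Fin.addCases (fun i2 => ?_) (fun i2 => ?_) i' <;>
      intro hlt <;>
      simp only [Fin.append_left, Fin.append_right]
  · refine hf ?_
    simpa only [Fin.lt_def, Fin.coe_castAdd] using hlt
  · exact hfg i1 i2
  · exfalso
    have h1 := i2.isLt
    simp only [Fin.lt_def, Fin.coe_castAdd, Fin.coe_natAdd] at hlt
    omega
  · refine hg ?_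
    simp only [Fin.lt_def, Fin.coe_natAdd] at hlt ⊢
    omega

lemma orderEmb_joinSet (s : Finset (Fin k)) (r : Finset (Fin j))
    (h : (joinSet s r).card = s.card + r.card) :
    ⇑((joinSet s r).orderEmbOfFin h)
      = Fin.append (fun i => Fin.castAdd j (s.orderEmbOfFin rfl i))
          (fun i => Fin.natAdd k (r.orderEmbOfFin rfl i)) := by
  refine (Finset.orderEmbOfFin_unique h ?_ ?_).symm
  · intro x
    refine Fin.addCases (fun i => ?_) (fun i => ?_) x
    · rw [Fin.append_left, mem_join_castAdd]
      exact Finset.orderEmbOfFin_mem s rfl i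
    · rw [Fin.append_right, mem_join_natAdd]
      exact Finset.orderEmbOfFin_mem r rfl i
  · refine strictMono_append ?_ ?_ ?_
    · intro u u' hu
      simp only [Fin.lt_def, Fin.coe_castAdd]
      exact (s.orderEmbOfFin rfl).strictMono hu
    · intro u u' hu
      simp only [Fin.lt_def, Fin.coe_natAdd]
      have := (r.orderEmbOfFin rfl).strictMono hu
      omega
    · intro u u'
      simp only [Fin.lt_def, Fin.coe_castAdd, Fin.coe_natAdd]
      have := (s.orderEmbOfFin rfl u).isLt
      omega

lemma factorial_choose_eq {p j : ℕ} (h : p ≤ j) :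
    ((j.factorial : ℝ))⁻¹ * (j.choose p : ℝ)
      = ((p.factorial : ℝ))⁻¹ * (((j-p).factorial : ℝ))⁻¹ := by
  have h1 := Nat.choose_mul_factorial_mul_factorial h
  have hp : (p.factorial : ℝ) ≠ 0 := Nat.cast_ne_zero.2 p.factorial_ne_zero
  have hq : ((j-p).factorial : ℝ) ≠ 0 := Nat.cast_ne_zero.2 (j-p).factorial_ne_zero
  have hpq : (j.factorial : ℝ) ≠ 0 := Nat.cast_ne_zero.2 j.factorial_ne_zero
  field_simp
  rw [← h1]
  push_cast
  ring

/-- Evaluating a `k`-linear family on the tuple obtained by selecting, from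
`Fin.append v (const w)`, the coordinates of `joinSet s r` in increasing order. -/
lemma apply_join {E F : Type*} [NormedAddCommGroup E] [NormedSpace ℝ E]
    [NormedAddCommGroup F] [NormedSpace ℝ F]
    (f : ∀ m : ℕ, E → ContinuousMultilinearMap ℝ (fun _ : Fin m => E) F) (y : E)
    (v : Fin k → E) (w : E) (s : Finset (Fin k)) (r : Finset (Fin j)) :
    f (joinSet s r).card y
        (fun i => (Fin.append v (fun _ : Fin j => w)) ((joinSet s r).orderEmbOfFin rfl i))
      = f (s.card + r.card) y
        (Fin.append (fun i => v (s.orderEmbOfFin rfl i)) (fun _ : Fin r.card => w)) := by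
  have hc : (joinSet s r).card = s.card + r.card := card_joinSet s r
  have h1 : (fun i : Fin (joinSet s r).card =>
        (Fin.append v (fun _ : Fin j => w)) ((joinSet s r).orderEmbOfFin rfl i))
      = (fun i => (Fin.append (fun i => v (s.orderEmbOfFin rfl i)) (fun _ : Fin r.card => w))
          (Fin.cast hc i)) := by
    funext i
    have h2 : (joinSet s r).orderEmbOfFin rfl i
        = (joinSet s r).orderEmbOfFin hc (Fin.cast hc i) :=
      Finset.orderEmbOfFin_eq_orderEmbOfFin_iff.2 rfl
    rw [h2, orderEmb_joinSet]
    refine Fin.addCases (fun i0 => ?_) (fun i0 => ?_) (Fin.cast hc i)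
    · rw [Fin.append_left, Fin.append_left, Fin.append_left]
    · rw [Fin.append_right, Fin.append_right, Fin.append_right]
  rw [h1, famCast]

lemma sum_card_finset {M : Type*} [AddCommMonoid M] (j : ℕ) (Ψ : ℕ → M) :
    ∑ r : Finset (Fin j), Ψ r.card = ∑ p ∈ Finset.range (j+1), (j.choose p) • Ψ p := by
  rw [← Finset.powerset_univ, Finset.sum_powerset]
  simp only [Finset.card_univ, Fintype.card_fin]
  refine Finset.sum_congr rfl fun p _ => ?_
  rw [Finset.sum_powersetCard]
  simp [Finset.card_univ]


section Families

variable {E F G H : Type*} [NormedAddCommGroup E] [NormedSpace ℝ E]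
  [NormedAddCommGroup F] [NormedSpace ℝ F]
  [NormedAddCommGroup G] [NormedSpace ℝ G]
  [NormedAddCommGroup H] [NormedSpace ℝ H]

/-- Select the coordinates of `v` belonging to `s`, in increasing order. -/
def sel {k : ℕ} (v : Fin k → E) (s : Finset (Fin k)) : Fin s.card → E :=
  fun i => v (s.orderEmbOfFin rfl i)

/-- `fᵃ⁺ᵖ(y)(v_s ⊗ w^{⊗p})` where `a = |s|`. -/
def FT (f : ∀ m : ℕ, E → ContinuousMultilinearMap ℝ (fun _ : Fin m => E) F)
    (y w : E) {k : ℕ} (v : Fin k → E) (s : Finset (Fin k)) (p : ℕ) : F :=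
  f (s.card + p) y (Fin.append (sel v s) (fun _ : Fin p => w))

/-- Taylor polynomial part of `f^{|s|}(x)(v_s)` based at `y`. -/
def Tay (n : ℕ) (f : ∀ m : ℕ, E → ContinuousMultilinearMap ℝ (fun _ : Fin m => E) F)
    (y w : E) {k : ℕ} (v : Fin k → E) (s : Finset (Fin k)) : F :=
  ∑ p ∈ Finset.range (n - s.card + 1), ((p.factorial : ℝ))⁻¹ • FT f y w v s p

lemma apply_join' {k j : ℕ}
    (f : ∀ m : ℕ, E → ContinuousMultilinearMap ℝ (fun _ : Fin m => E) F) (y : E)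
    (v : Fin k → E) (w : E) (s : Finset (Fin k)) (r : Finset (Fin j)) :
    f (joinSet s r).card y (sel (Fin.append v (fun _ : Fin j => w)) (joinSet s r))
      = FT f y w v s r.card := by
  unfold sel FT
  exact apply_join f y v w s r

lemma taylor_split (n : ℕ) (f : ∀ m : ℕ, E → ContinuousMultilinearMap ℝ (fun _ : Fin m => E) F)
    (x y : E) {k : ℕ} (v : Fin k → E) (s : Finset (Fin k)) :
    f s.card x (sel v s) = Tay n f y (x - y) v s + lipRemainder n f s.card x y (sel v s) := by
  unfold Tay FT lipRemainder
  abel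

lemma key_identity (n k : ℕ) (hkn : k ≤ n)
    (f : ∀ m : ℕ, E → ContinuousMultilinearMap ℝ (fun _ : Fin m => E) F)
    (g : ∀ m : ℕ, E → ContinuousMultilinearMap ℝ (fun _ : Fin m => E) G)
    (B : F →L[ℝ] G →L[ℝ] H)
    (h : ∀ m : ℕ, E → ContinuousMultilinearMap ℝ (fun _ : Fin m => E) H)
    (x y : E) (v : Fin k → E)
    (hhx : h k x v = ∑ s : Finset (Fin k), B (f s.card x (sel v s)) (g sᶜ.card x (sel v sᶜ)))
    (hhy : ∀ j, j ≤ n - k → ∀ u : Fin (k+j) → E,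
        h (k+j) y u = ∑ t : Finset (Fin (k+j)), B (f t.card y (sel u t)) (g tᶜ.card y (sel u tᶜ))) :
    lipRemainder n h k x y v
      = ∑ s : Finset (Fin k),
          (∑ pq ∈ (Finset.range (n - s.card + 1) ×ˢ Finset.range (n - sᶜ.card + 1)) \
              ((Finset.range (n-k+1) ×ˢ Finset.range (n-k+1)).filter
                (fun pq => pq.1 + pq.2 ≤ n - k)),
            (((pq.1.factorial : ℝ))⁻¹ * ((pq.2.factorial : ℝ))⁻¹) •
              B (FT f y (x-y) v s pq.1) (FT g y (x-y) v sᶜ pq.2)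
          + (B (Tay n f y (x-y) v s) (lipRemainder n g sᶜ.card x y (sel v sᶜ))
            + B (lipRemainder n f s.card x y (sel v s)) (Tay n g y (x-y) v sᶜ)
            + B (lipRemainder n f s.card x y (sel v s))
                (lipRemainder n g sᶜ.card x y (sel v sᶜ)))) := by
  classical
  have hcard_le : ∀ s : Finset (Fin k), s.card ≤ k := fun s => by simpa using s.card_le_univ
  have hTri_sub : ∀ s : Finset (Fin k),
      ((Finset.range (n-k+1) ×ˢ Finset.range (n-k+1)).filter
          (fun pq => pq.1 + pq.2 ≤ n - k))
        ⊆ Finset.range (n - s.card + 1) ×ˢ Finset.range (n - sᶜ.card + 1) := by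
    intro s pq hpq
    simp only [Finset.mem_filter, Finset.mem_product, Finset.mem_range] at hpq ⊢
    have h1 := hcard_le s
    have h2 := hcard_le sᶜ
    omega
  have hexp : ∀ j, j ≤ n - k →
      h (k+j) y (Fin.append v fun _ : Fin j => (x-y))
        = ∑ s : Finset (Fin k), ∑ p ∈ Finset.range (j+1),
            (j.choose p) • B (FT f y (x-y) v s p) (FT g y (x-y) v sᶜ (j-p)) := by
    intro j hj
    rw [hhy j hj]
    rw [sum_finset_split]
    refine Finset.sum_congr rfl fun s _ => ?_
    beta_reduce
    have hterm : ∀ r : Finset (Fin j),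
        B (f (joinSet s r).card y (sel (Fin.append v fun _ : Fin j => (x-y)) (joinSet s r)))
          (g (joinSet s r)ᶜ.card y (sel (Fin.append v fun _ : Fin j => (x-y)) (joinSet s r)ᶜ))
          = B (FT f y (x-y) v s r.card) (FT g y (x-y) v sᶜ (j - r.card)) := by
      intro r
      have hrc : rᶜ.card = j - r.card := by
        rw [Finset.card_compl, Fintype.card_fin]
      rw [compl_joinSet, apply_join' f y v (x-y) s r, apply_join' g y v (x-y) sᶜ rᶜ, hrc]
    rw [Finset.sum_congr rfl fun r _ => hterm r]
    exact sum_card_finset j (fun p => B (FT f y (x-y) v s p) (FT g y (x-y) v sᶜ (j - p)))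
  have hTS : ∑ j ∈ Finset.range (n-k+1),
        ((j.factorial : ℝ))⁻¹ • h (k+j) y (Fin.append v fun _ : Fin j => (x-y))
      = ∑ s : Finset (Fin k),
          ∑ pq ∈ ((Finset.range (n-k+1) ×ˢ Finset.range (n-k+1)).filter
              (fun pq => pq.1 + pq.2 ≤ n - k)),
            (((pq.1.factorial : ℝ))⁻¹ * ((pq.2.factorial : ℝ))⁻¹) •
              B (FT f y (x-y) v s pq.1) (FT g y (x-y) v sᶜ pq.2) := by
    have h1 : ∀ j ∈ Finset.range (n-k+1),
        ((j.factorial : ℝ))⁻¹ • h (k+j) y (Fin.append v fun _ : Fin j => (x-y))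
          = ∑ s : Finset (Fin k), ∑ p ∈ Finset.range (j+1),
              (((p.factorial : ℝ))⁻¹ * (((j-p).factorial : ℝ))⁻¹) •
                B (FT f y (x-y) v s p) (FT g y (x-y) v sᶜ (j-p)) := by
      intro j hj
      rw [Finset.mem_range] at hj
      rw [hexp j (by omega), Finset.smul_sum]
      refine Finset.sum_congr rfl fun s _ => ?_
      rw [Finset.smul_sum]
      refine Finset.sum_congr rfl fun p hp => ?_
      rw [Finset.mem_range] at hp
      rw [← Nat.cast_smul_eq_nsmul ℝ, smul_smul, factorial_choose_eq (by omega)]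
    rw [Finset.sum_congr rfl h1, Finset.sum_comm]
    refine Finset.sum_congr rfl fun s _ => ?_
    exact triangle_reindex (n-k) (fun p q => (((p.factorial : ℝ))⁻¹ * (((q).factorial : ℝ))⁻¹) •
      B (FT f y (x-y) v s p) (FT g y (x-y) v sᶜ q))
  have hBTT : ∀ s : Finset (Fin k),
      B (Tay n f y (x-y) v s) (Tay n g y (x-y) v sᶜ)
        = ∑ pq ∈ Finset.range (n - s.card + 1) ×ˢ Finset.range (n - sᶜ.card + 1),
            (((pq.1.factorial : ℝ))⁻¹ * ((pq.2.factorial : ℝ))⁻¹) •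
              B (FT f y (x-y) v s pq.1) (FT g y (x-y) v sᶜ pq.2) := by
    intro s
    rw [Finset.sum_product]
    unfold Tay
    rw [map_sum B _ (Finset.range (n - s.card + 1)), ContinuousLinearMap.sum_apply]
    refine Finset.sum_congr rfl fun p _ => ?_
    rw [map_smul, ContinuousLinearMap.smul_apply,
      map_sum (B (FT f y (x-y) v s p)) _ (Finset.range (n - sᶜ.card + 1)), Finset.smul_sum]
    refine Finset.sum_congr rfl fun q _ => ?_
    rw [map_smul, smul_smul]
  have hlhs : lipRemainder n h k x y v
      = h k x v - ∑ j ∈ Finset.range (n-k+1),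
          ((j.factorial : ℝ))⁻¹ • h (k+j) y (Fin.append v fun _ : Fin j => (x-y)) := rfl
  rw [hlhs, hTS, hhx, ← Finset.sum_sub_distrib]
  refine Finset.sum_congr rfl fun s _ => ?_
  rw [taylor_split n f x y v s, taylor_split n g x y v sᶜ]
  simp only [map_add, ContinuousLinearMap.add_apply]
  rw [hBTT s, ← Finset.sum_sdiff (hTri_sub s)]
  abel

end Families

end Aux8

set_option maxHeartbeats 2000000 in
/-- **Bilinear images of pairs of Lipschitz maps** (Proposition 2.10).
There is a constant `C` depending only on `γ` such that for all Lip-γ collections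
`f` (into `F`) and `g` (into `G`) on `U ⊆ E` with constants `Mf`, `Mg`, and every
continuous bilinear `B : F × G → H`, the collection `h` whose terms are given by
the Leibniz rule
`hᵏ(x)(v₁⊗⋯⊗v_k) = ∑_{S ⊆ {1,…,k}} B(f^{|S|}(x)(v_S), g^{k-|S|}(x)(v_{Sᶜ}))`
(in particular `h⁰ = B(f⁰, g⁰)`) is Lip-γ on `U` with constant
`C · ‖B‖ · Mf · Mg`. -/
theorem statement8 (γ : ℝ) (n : ℕ) (ε : ℝ) (hε0 : 0 < ε) (hε1 : ε ≤ 1)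
    (hγ : γ = n + ε) :
    ∃ C : ℝ, 0 ≤ C ∧
      ∀ (E F G H : Type*)
        [NormedAddCommGroup E] [NormedSpace ℝ E]
        [NormedAddCommGroup F] [NormedSpace ℝ F]
        [NormedAddCommGroup G] [NormedSpace ℝ G]
        [NormedAddCommGroup H] [NormedSpace ℝ H]
        (U : Set E) (Mf Mg : ℝ), 0 ≤ Mf → 0 ≤ Mg →
        ∀ (f : ∀ k : ℕ, E → ContinuousMultilinearMap ℝ (fun _ : Fin k => E) F)
          (g : ∀ k : ℕ, E → ContinuousMultilinearMap ℝ (fun _ : Fin k => E) G),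
        IsSymmColl n f U → IsSymmColl n g U →
        IsLipCollBetween γ 0 n Mf f U →
        IsLipCollBetween γ 0 n Mg g U →
        ∀ B : F →L[ℝ] G →L[ℝ] H,
        ∀ h : ∀ k : ℕ, E → ContinuousMultilinearMap ℝ (fun _ : Fin k => E) H,
          -- `h` is the collection given by the Leibniz rule applied to `f` and `g`:
          (∀ k, k ≤ n → ∀ x ∈ U, ∀ v : Fin k → E,
            h k x v = ∑ s : Finset (Fin k),
              B (f s.card x fun i => v (s.orderEmbOfFin rfl i))
                (g sᶜ.card x fun i => v (sᶜ.orderEmbOfFin rfl i))) →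
          IsLipCollBetween γ 0 n (C * ‖B‖ * Mf * Mg) h U := by
  classical
  refine ⟨2^n * ((n:ℝ)+2)^2 + 2^n * ((n:ℝ)+2), by positivity, ?_⟩
  intro E F G H _ _ _ _ _ _ _ _ U Mf Mg hMf hMg f g hsf hsg hf hg B h hh
  set C : ℝ := 2^n * ((n:ℝ)+2)^2 + 2^n * ((n:ℝ)+2) with hCdef
  have hn0 : (0:ℝ) ≤ (n:ℝ) := Nat.cast_nonneg n
  have h2n : (0:ℝ) < 2^n := by positivity
  have hK : (0:ℝ) ≤ ‖B‖ * Mf * Mg := by positivity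
  -- uniform bound on ‖h m z u‖
  have hbound : ∀ m, m ≤ n → ∀ z ∈ U, ∀ u : Fin m → E,
      ‖h m z u‖ ≤ 2^m * (‖B‖ * Mf * Mg) * ∏ i, ‖u i‖ := by
    intro m hm z hz u
    have hPu : (0:ℝ) ≤ ∏ i, ‖u i‖ := Finset.prod_nonneg fun i _ => norm_nonneg _
    rw [hh m hm z hz u]
    have hterm : ∀ s : Finset (Fin m),
        ‖B (f s.card z fun i => u (s.orderEmbOfFin rfl i))
            (g sᶜ.card z fun i => u (sᶜ.orderEmbOfFin rfl i))‖
          ≤ (‖B‖ * Mf * Mg) * ∏ i, ‖u i‖ := by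
      intro s
      have hsm : s.card ≤ n := le_trans (by simpa using s.card_le_univ) hm
      have hsm' : sᶜ.card ≤ n := le_trans (by simpa using sᶜ.card_le_univ) hm
      have h1 := hf.1 s.card (Nat.zero_le _) hsm z hz (fun i => u (s.orderEmbOfFin rfl i))
      have h2 := hg.1 sᶜ.card (Nat.zero_le _) hsm' z hz (fun i => u (sᶜ.orderEmbOfFin rfl i))
      rw [Aux8.prodEmb s (fun i => ‖u i‖)] at h1
      rw [Aux8.prodEmb sᶜ (fun i => ‖u i‖)] at h2
      have hps : (0:ℝ) ≤ ∏ i ∈ s, ‖u i‖ := Finset.prod_nonneg fun i _ => norm_nonneg _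
      have hqs : (0:ℝ) ≤ ∏ i ∈ sᶜ, ‖u i‖ := Finset.prod_nonneg fun i _ => norm_nonneg _
      calc ‖B (f s.card z fun i => u (s.orderEmbOfFin rfl i))
            (g sᶜ.card z fun i => u (sᶜ.orderEmbOfFin rfl i))‖
          ≤ ‖B‖ * ‖f s.card z fun i => u (s.orderEmbOfFin rfl i)‖
            * ‖g sᶜ.card z fun i => u (sᶜ.orderEmbOfFin rfl i)‖ := B.le_opNorm₂ _ _
        _ ≤ ‖B‖ * (Mf * ∏ i ∈ s, ‖u i‖) * (Mg * ∏ i ∈ sᶜ, ‖u i‖) := by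
            gcongr <;> first
              | exact (norm_nonneg _).trans h1
              | exact norm_nonneg _
              | exact h1
              | exact h2
        _ = (‖B‖ * Mf * Mg) * ((∏ i ∈ s, ‖u i‖) * ∏ i ∈ sᶜ, ‖u i‖) := by ring
        _ = (‖B‖ * Mf * Mg) * ∏ i, ‖u i‖ := by
            rw [Finset.prod_mul_prod_compl]
    calc ‖∑ s : Finset (Fin m), B (f s.card z fun i => u (s.orderEmbOfFin rfl i))
            (g sᶜ.card z fun i => u (sᶜ.orderEmbOfFin rfl i))‖
        ≤ ∑ s : Finset (Fin m), ‖B (f s.card z fun i => u (s.orderEmbOfFin rfl i))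
            (g sᶜ.card z fun i => u (sᶜ.orderEmbOfFin rfl i))‖ := norm_sum_le _ _
      _ ≤ ∑ _s : Finset (Fin m), (‖B‖ * Mf * Mg) * ∏ i, ‖u i‖ :=
          Finset.sum_le_sum fun s _ => hterm s
      _ = 2^m * (‖B‖ * Mf * Mg) * ∏ i, ‖u i‖ := by
          rw [Finset.sum_const, Finset.card_univ, Fintype.card_finset, Fintype.card_fin,
            nsmul_eq_mul]
          push_cast
          ring
  refine ⟨?_, ?_⟩
  · -- part (i)
    intro k _ hkn x hx u
    have hPu : (0:ℝ) ≤ ∏ i, ‖u i‖ := Finset.prod_nonneg fun i _ => norm_nonneg _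
    refine (hbound k hkn x hx u).trans ?_
    have h2k : (2:ℝ)^k ≤ C := by
      have h1 : (2:ℝ)^k ≤ 2^n := by
        apply pow_le_pow_right₀ one_le_two hkn
      nlinarith
    calc 2^k * (‖B‖ * Mf * Mg) * ∏ i, ‖u i‖ ≤ C * (‖B‖ * Mf * Mg) * ∏ i, ‖u i‖ := by gcongr
      _ = C * ‖B‖ * Mf * Mg * ∏ i, ‖u i‖ := by ring
  · -- part (ii)
    intro k _ hkn x hx y hy v
    set w : E := x - y with hwdef
    have hP0 : (0:ℝ) ≤ ∏ i, ‖v i‖ := Finset.prod_nonneg fun i _ => norm_nonneg _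
    have hγk : 0 ≤ γ - (k:ℝ) := by
      have : (k:ℝ) ≤ (n:ℝ) := Nat.cast_le.2 hkn
      rw [hγ]; linarith
    have hω0 : (0:ℝ) ≤ ‖w‖ ^ (γ - (k:ℝ)) := Real.rpow_nonneg (norm_nonneg _) _
    have happrod : ∀ (m : ℕ) (u : Fin m → E) (j : ℕ),
        ∏ i : Fin (m+j), ‖Fin.append u (fun _ : Fin j => w) i‖ = (∏ i, ‖u i‖) * ‖w‖^j := by
      intro m u j
      rw [Fin.prod_univ_add]
      simp [Fin.append_left, Fin.append_right]
    have hcard_le : ∀ s : Finset (Fin k), s.card ≤ k := fun s => by simpa using s.card_le_univ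
    by_cases hw1 : ‖w‖ ≤ 1
    · -- main case
      have hkey := Aux8.key_identity n k hkn f g B h x y v
        (by exact hh k hkn x hx v)
        (fun j hj u => by exact hh (k+j) (by omega) y hy u)
      simp only [← hwdef] at hkey
      set ω := ‖w‖ ^ (γ - (k:ℝ)) with hωdef
      set P := ∏ i, ‖v i‖ with hPdef
      have hfac1 : ∀ p : ℕ, ((p.factorial:ℝ))⁻¹ ≤ 1 := fun p => by
        rw [inv_le_one_iff₀]; right; exact_mod_cast p.factorial_pos
      have hw0 : (0:ℝ) ≤ ‖w‖ := norm_nonneg _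
      -- bounds on building blocks
      have hFTf : ∀ (s : Finset (Fin k)) (p : ℕ), s.card + p ≤ n →
          ‖Aux8.FT f y w v s p‖ ≤ Mf * (∏ i ∈ s, ‖v i‖) * ‖w‖^p := by
        intro s p hsp
        have h1 := hf.1 (s.card + p) (Nat.zero_le _) hsp y hy
          (Fin.append (Aux8.sel v s) (fun _ : Fin p => w))
        rw [happrod s.card (Aux8.sel v s) p] at h1
        have h2 : ∏ i, ‖Aux8.sel v s i‖ = ∏ i ∈ s, ‖v i‖ := by
          simp only [Aux8.sel]
          exact Aux8.prodEmb s (fun i => ‖v i‖)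
        rw [h2] at h1
        simp only [Aux8.FT]
        calc ‖f (s.card + p) y (Fin.append (Aux8.sel v s) fun _ : Fin p => w)‖
            ≤ Mf * ((∏ i ∈ s, ‖v i‖) * ‖w‖^p) := h1
          _ = Mf * (∏ i ∈ s, ‖v i‖) * ‖w‖^p := by ring
      have hFTg : ∀ (s : Finset (Fin k)) (p : ℕ), s.card + p ≤ n →
          ‖Aux8.FT g y w v s p‖ ≤ Mg * (∏ i ∈ s, ‖v i‖) * ‖w‖^p := by
        intro s p hsp
        have h1 := hg.1 (s.card + p) (Nat.zero_le _) hsp y hy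
          (Fin.append (Aux8.sel v s) (fun _ : Fin p => w))
        rw [happrod s.card (Aux8.sel v s) p] at h1
        have h2 : ∏ i, ‖Aux8.sel v s i‖ = ∏ i ∈ s, ‖v i‖ := by
          simp only [Aux8.sel]
          exact Aux8.prodEmb s (fun i => ‖v i‖)
        rw [h2] at h1
        simp only [Aux8.FT]
        calc ‖g (s.card + p) y (Fin.append (Aux8.sel v s) fun _ : Fin p => w)‖
            ≤ Mg * ((∏ i ∈ s, ‖v i‖) * ‖w‖^p) := h1
          _ = Mg * (∏ i ∈ s, ‖v i‖) * ‖w‖^p := by ring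
      have hprod0 : ∀ s : Finset (Fin k), (0:ℝ) ≤ ∏ i ∈ s, ‖v i‖ :=
        fun s => Finset.prod_nonneg fun i _ => norm_nonneg _
      have hTayf : ∀ s : Finset (Fin k),
          ‖Aux8.Tay n f y w v s‖ ≤ ((n:ℝ)+1) * (Mf * ∏ i ∈ s, ‖v i‖) := by
        intro s
        have hsk : s.card ≤ n := le_trans (hcard_le s) hkn
        calc ‖Aux8.Tay n f y w v s‖
            ≤ ∑ p ∈ Finset.range (n - s.card + 1), ‖((p.factorial:ℝ))⁻¹ • Aux8.FT f y w v s p‖ := by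
              rw [Aux8.Tay]; exact norm_sum_le _ _
          _ ≤ ∑ _p ∈ Finset.range (n - s.card + 1), (Mf * ∏ i ∈ s, ‖v i‖) := by
              refine Finset.sum_le_sum fun p hp => ?_
              rw [Finset.mem_range] at hp
              rw [norm_smul, Real.norm_eq_abs, abs_of_nonneg (by positivity)]
              calc ((p.factorial:ℝ))⁻¹ * ‖Aux8.FT f y w v s p‖
                  ≤ 1 * (Mf * (∏ i ∈ s, ‖v i‖) * ‖w‖^p) := by
                    refine mul_le_mul (hfac1 p) (hFTf s p (by omega)) (norm_nonneg _) zero_le_one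
                _ ≤ 1 * (Mf * (∏ i ∈ s, ‖v i‖) * 1) := by
                    gcongr <;> first
                      | exact mul_nonneg hMf (hprod0 s)
                      | exact pow_le_one₀ hw0 hw1
                _ = Mf * ∏ i ∈ s, ‖v i‖ := by ring
          _ = ((n - s.card + 1 : ℕ):ℝ) * (Mf * ∏ i ∈ s, ‖v i‖) := by
              rw [Finset.sum_const, Finset.card_range, nsmul_eq_mul]
          _ ≤ ((n:ℝ)+1) * (Mf * ∏ i ∈ s, ‖v i‖) := by
              refine mul_le_mul_of_nonneg_right ?_ (mul_nonneg hMf (hprod0 s))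
              have h9 : (n - s.card + 1 : ℕ) ≤ n + 1 := by omega
              exact_mod_cast Nat.cast_le.2 h9
      have hTayg : ∀ s : Finset (Fin k),
          ‖Aux8.Tay n g y w v s‖ ≤ ((n:ℝ)+1) * (Mg * ∏ i ∈ s, ‖v i‖) := by
        intro s
        have hsk : s.card ≤ n := le_trans (hcard_le s) hkn
        calc ‖Aux8.Tay n g y w v s‖
            ≤ ∑ p ∈ Finset.range (n - s.card + 1), ‖((p.factorial:ℝ))⁻¹ • Aux8.FT g y w v s p‖ := by
              rw [Aux8.Tay]; exact norm_sum_le _ _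
          _ ≤ ∑ _p ∈ Finset.range (n - s.card + 1), (Mg * ∏ i ∈ s, ‖v i‖) := by
              refine Finset.sum_le_sum fun p hp => ?_
              rw [Finset.mem_range] at hp
              rw [norm_smul, Real.norm_eq_abs, abs_of_nonneg (by positivity)]
              calc ((p.factorial:ℝ))⁻¹ * ‖Aux8.FT g y w v s p‖
                  ≤ 1 * (Mg * (∏ i ∈ s, ‖v i‖) * ‖w‖^p) := by
                    refine mul_le_mul (hfac1 p) (hFTg s p (by omega)) (norm_nonneg _) zero_le_one
                _ ≤ 1 * (Mg * (∏ i ∈ s, ‖v i‖) * 1) := by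
                    gcongr <;> first
                      | exact mul_nonneg hMg (hprod0 s)
                      | exact pow_le_one₀ hw0 hw1
                _ = Mg * ∏ i ∈ s, ‖v i‖ := by ring
          _ = ((n - s.card + 1 : ℕ):ℝ) * (Mg * ∏ i ∈ s, ‖v i‖) := by
              rw [Finset.sum_const, Finset.card_range, nsmul_eq_mul]
          _ ≤ ((n:ℝ)+1) * (Mg * ∏ i ∈ s, ‖v i‖) := by
              refine mul_le_mul_of_nonneg_right ?_ (mul_nonneg hMg (hprod0 s))
              have h9 : (n - s.card + 1 : ℕ) ≤ n + 1 := by omega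
              exact_mod_cast Nat.cast_le.2 h9
      -- rpow monotonicity helpers
      have hrpow_mono : ∀ s : Finset (Fin k), ‖w‖ ^ (γ - (s.card:ℝ)) ≤ ω := by
        intro s
        rw [hωdef]
        refine Real.rpow_le_rpow_of_exponent_ge' hw0 hw1 hγk ?_
        have : ((s.card:ℕ):ℝ) ≤ (k:ℝ) := Nat.cast_le.2 (hcard_le s)
        linarith
      have hrpow_one : ∀ s : Finset (Fin k), ‖w‖ ^ (γ - (s.card:ℝ)) ≤ 1 := by
        intro s
        refine Real.rpow_le_one hw0 hw1 ?_
        have h1 : ((s.card:ℕ):ℝ) ≤ (k:ℝ) := Nat.cast_le.2 (hcard_le s)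
        linarith
      have hRemf : ∀ s : Finset (Fin k),
          ‖lipRemainder n f s.card x y (Aux8.sel v s)‖
            ≤ Mf * ‖w‖ ^ (γ - (s.card:ℝ)) * ∏ i ∈ s, ‖v i‖ := by
        intro s
        have h1 := hf.2 s.card (Nat.zero_le _) (le_trans (hcard_le s) hkn) x hx y hy
          (Aux8.sel v s)
        have h2 : ∏ i, ‖Aux8.sel v s i‖ = ∏ i ∈ s, ‖v i‖ := by
          simp only [Aux8.sel]
          exact Aux8.prodEmb s (fun i => ‖v i‖)
        rw [h2, ← hwdef] at h1
        exact h1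
      have hRemg : ∀ s : Finset (Fin k),
          ‖lipRemainder n g s.card x y (Aux8.sel v s)‖
            ≤ Mg * ‖w‖ ^ (γ - (s.card:ℝ)) * ∏ i ∈ s, ‖v i‖ := by
        intro s
        have h1 := hg.2 s.card (Nat.zero_le _) (le_trans (hcard_le s) hkn) x hx y hy
          (Aux8.sel v s)
        have h2 : ∏ i, ‖Aux8.sel v s i‖ = ∏ i ∈ s, ‖v i‖ := by
          simp only [Aux8.sel]
          exact Aux8.prodEmb s (fun i => ‖v i‖)
        rw [h2, ← hwdef] at h1
        exact h1
      -- per-s bound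
      have hper : ∀ s : Finset (Fin k),
          ‖∑ pq ∈ (Finset.range (n - s.card + 1) ×ˢ Finset.range (n - sᶜ.card + 1)) \
              ((Finset.range (n-k+1) ×ˢ Finset.range (n-k+1)).filter
                (fun pq => pq.1 + pq.2 ≤ n - k)),
            (((pq.1.factorial : ℝ))⁻¹ * ((pq.2.factorial : ℝ))⁻¹) •
              B (Aux8.FT f y w v s pq.1) (Aux8.FT g y w v sᶜ pq.2)
          + (B (Aux8.Tay n f y w v s) (lipRemainder n g sᶜ.card x y (Aux8.sel v sᶜ))
            + B (lipRemainder n f s.card x y (Aux8.sel v s)) (Aux8.Tay n g y w v sᶜ)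
            + B (lipRemainder n f s.card x y (Aux8.sel v s))
                (lipRemainder n g sᶜ.card x y (Aux8.sel v sᶜ)))‖
          ≤ (((n:ℝ)+2)^2) * ((‖B‖ * Mf * Mg) * (ω * P)) := by
        intro s
        have hPQ : (∏ i ∈ s, ‖v i‖) * (∏ i ∈ sᶜ, ‖v i‖) = P := by
          rw [hPdef]; exact Finset.prod_mul_prod_compl s _
        have hb0 : (0:ℝ) ≤ (‖B‖ * Mf * Mg) * (ω * P) :=
          mul_nonneg hK (mul_nonneg hω0 hP0)
        -- piece 1 : the sdiff sum
        have hp1 : ‖∑ pq ∈ (Finset.range (n - s.card + 1) ×ˢ Finset.range (n - sᶜ.card + 1)) \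
              ((Finset.range (n-k+1) ×ˢ Finset.range (n-k+1)).filter
                (fun pq => pq.1 + pq.2 ≤ n - k)),
            (((pq.1.factorial : ℝ))⁻¹ * ((pq.2.factorial : ℝ))⁻¹) •
              B (Aux8.FT f y w v s pq.1) (Aux8.FT g y w v sᶜ pq.2)‖
            ≤ (((n:ℝ)+1)^2) * ((‖B‖ * Mf * Mg) * (ω * P)) := by
          have hterm : ∀ pq ∈ (Finset.range (n - s.card + 1) ×ˢ Finset.range (n - sᶜ.card + 1)) \
              ((Finset.range (n-k+1) ×ˢ Finset.range (n-k+1)).filter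
                (fun pq => pq.1 + pq.2 ≤ n - k)),
              ‖(((pq.1.factorial : ℝ))⁻¹ * ((pq.2.factorial : ℝ))⁻¹) •
                B (Aux8.FT f y w v s pq.1) (Aux8.FT g y w v sᶜ pq.2)‖
                ≤ (‖B‖ * Mf * Mg) * (ω * P) := by
            rintro ⟨p, q⟩ hpq
            simp only [Finset.mem_sdiff, Finset.mem_filter, Finset.mem_product,
              Finset.mem_range] at hpq
            have hcs := hcard_le s
            have hcsc := hcard_le sᶜ
            have hsp : s.card + p ≤ n := by omega
            have hscq : sᶜ.card + q ≤ n := by omega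
            have hpqn : n - k + 1 ≤ p + q := by omega
            have hwpq : ‖w‖^(p+q) ≤ ω := by
              rw [hωdef, ← Real.rpow_natCast ‖w‖ (p+q)]
              refine Real.rpow_le_rpow_of_exponent_ge' hw0 hw1 hγk ?_
              have hc : ((n-k+1:ℕ):ℝ) ≤ ((p+q:ℕ):ℝ) := Nat.cast_le.2 hpqn
              rw [Nat.cast_add, Nat.cast_add, Nat.cast_sub hkn, Nat.cast_one] at hc
              push_cast
              rw [hγ]
              linarith
            rw [norm_smul, Real.norm_eq_abs, abs_of_nonneg (by positivity)]
            calc (((p.factorial : ℝ))⁻¹ * ((q.factorial : ℝ))⁻¹) *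
                  ‖B (Aux8.FT f y w v s p) (Aux8.FT g y w v sᶜ q)‖
                ≤ 1 * ‖B (Aux8.FT f y w v s p) (Aux8.FT g y w v sᶜ q)‖ := by
                  refine mul_le_mul_of_nonneg_right ?_ (norm_nonneg _)
                  calc ((p.factorial : ℝ))⁻¹ * ((q.factorial : ℝ))⁻¹
                      ≤ 1 * 1 := by
                        refine mul_le_mul (hfac1 p) (hfac1 q) (by positivity) zero_le_one
                    _ = 1 := by ring
              _ = ‖B (Aux8.FT f y w v s p) (Aux8.FT g y w v sᶜ q)‖ := one_mul _
              _ ≤ ‖B‖ * ‖Aux8.FT f y w v s p‖ * ‖Aux8.FT g y w v sᶜ q‖ := B.le_opNorm₂ _ _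
              _ ≤ ‖B‖ * (Mf * (∏ i ∈ s, ‖v i‖) * ‖w‖^p) * (Mg * (∏ i ∈ sᶜ, ‖v i‖) * ‖w‖^q) := by
                  gcongr <;> first
                    | exact (norm_nonneg _).trans (hFTf s p hsp)
                    | exact norm_nonneg _
                    | exact hFTf s p hsp
                    | exact hFTg sᶜ q hscq
              _ = (‖B‖ * Mf * Mg) * (‖w‖^(p+q) * ((∏ i ∈ s, ‖v i‖) * (∏ i ∈ sᶜ, ‖v i‖))) := by
                  rw [pow_add]; ring
              _ ≤ (‖B‖ * Mf * Mg) * (ω * ((∏ i ∈ s, ‖v i‖) * (∏ i ∈ sᶜ, ‖v i‖))) := by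
                  gcongr <;> first
                    | exact hwpq
                    | exact mul_nonneg (hprod0 s) (hprod0 sᶜ)
                    | positivity
              _ = (‖B‖ * Mf * Mg) * (ω * P) := by rw [hPQ]
          calc ‖∑ pq ∈ (Finset.range (n - s.card + 1) ×ˢ Finset.range (n - sᶜ.card + 1)) \
              ((Finset.range (n-k+1) ×ˢ Finset.range (n-k+1)).filter
                (fun pq => pq.1 + pq.2 ≤ n - k)),
            (((pq.1.factorial : ℝ))⁻¹ * ((pq.2.factorial : ℝ))⁻¹) •
              B (Aux8.FT f y w v s pq.1) (Aux8.FT g y w v sᶜ pq.2)‖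
              ≤ ((Finset.range (n - s.card + 1) ×ˢ Finset.range (n - sᶜ.card + 1)) \
              ((Finset.range (n-k+1) ×ˢ Finset.range (n-k+1)).filter
                (fun pq => pq.1 + pq.2 ≤ n - k))).card • ((‖B‖ * Mf * Mg) * (ω * P)) := by
                refine (norm_sum_le _ _).trans ?_
                exact Finset.sum_le_card_nsmul _ _ _ hterm
            _ ≤ (((n:ℝ)+1)^2) * ((‖B‖ * Mf * Mg) * (ω * P)) := by
                rw [nsmul_eq_mul]
                refine mul_le_mul_of_nonneg_right ?_ hb0
                have hc1 : ((Finset.range (n - s.card + 1) ×ˢ Finset.range (n - sᶜ.card + 1)) \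
                    ((Finset.range (n-k+1) ×ˢ Finset.range (n-k+1)).filter
                      (fun pq => pq.1 + pq.2 ≤ n - k))).card ≤ (n+1) * (n+1) := by
                  refine le_trans (Finset.card_le_card Finset.sdiff_subset) ?_
                  rw [Finset.card_product, Finset.card_range, Finset.card_range]
                  exact Nat.mul_le_mul (by omega) (by omega)
                have hc2 : (((Finset.range (n - s.card + 1) ×ˢ Finset.range (n - sᶜ.card + 1)) \
                    ((Finset.range (n-k+1) ×ˢ Finset.range (n-k+1)).filter
                      (fun pq => pq.1 + pq.2 ≤ n - k))).card : ℝ) ≤ (((n+1) * (n+1) : ℕ):ℝ) :=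
                  Nat.cast_le.2 hc1
                push_cast at hc2
                nlinarith [hc2]
        -- piece 2
        have hp2 : ‖B (Aux8.Tay n f y w v s) (lipRemainder n g sᶜ.card x y (Aux8.sel v sᶜ))‖
            ≤ (((n:ℝ)+1)) * ((‖B‖ * Mf * Mg) * (ω * P)) := by
          calc ‖B (Aux8.Tay n f y w v s) (lipRemainder n g sᶜ.card x y (Aux8.sel v sᶜ))‖
              ≤ ‖B‖ * ‖Aux8.Tay n f y w v s‖ * ‖lipRemainder n g sᶜ.card x y (Aux8.sel v sᶜ)‖ :=
                B.le_opNorm₂ _ _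
            _ ≤ ‖B‖ * (((n:ℝ)+1) * (Mf * ∏ i ∈ s, ‖v i‖)) *
                  (Mg * ‖w‖ ^ (γ - (sᶜ.card:ℝ)) * ∏ i ∈ sᶜ, ‖v i‖) := by
                gcongr <;> first
                  | exact (norm_nonneg _).trans (hTayf s)
                  | exact norm_nonneg _
                  | exact hTayf s
                  | exact hRemg sᶜ
            _ ≤ ‖B‖ * (((n:ℝ)+1) * (Mf * ∏ i ∈ s, ‖v i‖)) * (Mg * ω * ∏ i ∈ sᶜ, ‖v i‖) := by
                gcongr <;> first
                  | exact hrpow_mono sᶜ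
                  | positivity
            _ = (((n:ℝ)+1)) * ((‖B‖ * Mf * Mg) * (ω * ((∏ i ∈ s, ‖v i‖) * ∏ i ∈ sᶜ, ‖v i‖))) := by
                ring
            _ = (((n:ℝ)+1)) * ((‖B‖ * Mf * Mg) * (ω * P)) := by rw [hPQ]
        -- piece 3
        have hp3 : ‖B (lipRemainder n f s.card x y (Aux8.sel v s)) (Aux8.Tay n g y w v sᶜ)‖
            ≤ (((n:ℝ)+1)) * ((‖B‖ * Mf * Mg) * (ω * P)) := by
          calc ‖B (lipRemainder n f s.card x y (Aux8.sel v s)) (Aux8.Tay n g y w v sᶜ)‖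
              ≤ ‖B‖ * ‖lipRemainder n f s.card x y (Aux8.sel v s)‖ * ‖Aux8.Tay n g y w v sᶜ‖ :=
                B.le_opNorm₂ _ _
            _ ≤ ‖B‖ * (Mf * ‖w‖ ^ (γ - (s.card:ℝ)) * ∏ i ∈ s, ‖v i‖) *
                  (((n:ℝ)+1) * (Mg * ∏ i ∈ sᶜ, ‖v i‖)) := by
                gcongr <;> first
                  | exact (norm_nonneg _).trans (hRemf s)
                  | exact norm_nonneg _
                  | exact hRemf s
                  | exact hTayg sᶜ
            _ ≤ ‖B‖ * (Mf * ω * ∏ i ∈ s, ‖v i‖) * (((n:ℝ)+1) * (Mg * ∏ i ∈ sᶜ, ‖v i‖)) := by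
                gcongr <;> first
                  | exact hrpow_mono s
                  | positivity
            _ = (((n:ℝ)+1)) * ((‖B‖ * Mf * Mg) * (ω * ((∏ i ∈ s, ‖v i‖) * ∏ i ∈ sᶜ, ‖v i‖))) := by
                ring
            _ = (((n:ℝ)+1)) * ((‖B‖ * Mf * Mg) * (ω * P)) := by rw [hPQ]
        -- piece 4
        have hp4 : ‖B (lipRemainder n f s.card x y (Aux8.sel v s))
              (lipRemainder n g sᶜ.card x y (Aux8.sel v sᶜ))‖
            ≤ (‖B‖ * Mf * Mg) * (ω * P) := by
          calc ‖B (lipRemainder n f s.card x y (Aux8.sel v s))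
                (lipRemainder n g sᶜ.card x y (Aux8.sel v sᶜ))‖
              ≤ ‖B‖ * ‖lipRemainder n f s.card x y (Aux8.sel v s)‖ *
                  ‖lipRemainder n g sᶜ.card x y (Aux8.sel v sᶜ)‖ := B.le_opNorm₂ _ _
            _ ≤ ‖B‖ * (Mf * ‖w‖ ^ (γ - (s.card:ℝ)) * ∏ i ∈ s, ‖v i‖) *
                  (Mg * ‖w‖ ^ (γ - (sᶜ.card:ℝ)) * ∏ i ∈ sᶜ, ‖v i‖) := by
                gcongr <;> first
                  | exact (norm_nonneg _).trans (hRemf s)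
                  | exact norm_nonneg _
                  | exact hRemf s
                  | exact hRemg sᶜ
            _ ≤ ‖B‖ * (Mf * ω * ∏ i ∈ s, ‖v i‖) * (Mg * 1 * ∏ i ∈ sᶜ, ‖v i‖) := by
                gcongr <;> first
                  | exact hrpow_mono s
                  | exact hrpow_one sᶜ
                  | positivity
            _ = (‖B‖ * Mf * Mg) * (ω * ((∏ i ∈ s, ‖v i‖) * ∏ i ∈ sᶜ, ‖v i‖)) := by ring
            _ = (‖B‖ * Mf * Mg) * (ω * P) := by rw [hPQ]
        calc ‖_ + (_ + _ + _)‖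
            ≤ ‖∑ pq ∈ (Finset.range (n - s.card + 1) ×ˢ Finset.range (n - sᶜ.card + 1)) \
              ((Finset.range (n-k+1) ×ˢ Finset.range (n-k+1)).filter
                (fun pq => pq.1 + pq.2 ≤ n - k)),
            (((pq.1.factorial : ℝ))⁻¹ * ((pq.2.factorial : ℝ))⁻¹) •
              B (Aux8.FT f y w v s pq.1) (Aux8.FT g y w v sᶜ pq.2)‖
            + (‖B (Aux8.Tay n f y w v s) (lipRemainder n g sᶜ.card x y (Aux8.sel v sᶜ))‖
              + ‖B (lipRemainder n f s.card x y (Aux8.sel v s)) (Aux8.Tay n g y w v sᶜ)‖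
              + ‖B (lipRemainder n f s.card x y (Aux8.sel v s))
                  (lipRemainder n g sᶜ.card x y (Aux8.sel v sᶜ))‖) := by
              refine (norm_add_le _ _).trans ?_
              gcongr
              refine (norm_add_le _ _).trans ?_
              gcongr
              exact norm_add_le _ _
          _ ≤ (((n:ℝ)+1)^2) * ((‖B‖ * Mf * Mg) * (ω * P))
              + ((((n:ℝ)+1)) * ((‖B‖ * Mf * Mg) * (ω * P))
                + (((n:ℝ)+1)) * ((‖B‖ * Mf * Mg) * (ω * P))
                + (‖B‖ * Mf * Mg) * (ω * P)) := by
              gcongr <;> first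
                | exact hp1
                | exact hp2
                | exact hp3
                | exact hp4
          _ = (((n:ℝ)+1)^2 + 2*((n:ℝ)+1) + 1) * ((‖B‖ * Mf * Mg) * (ω * P)) := by ring
          _ = (((n:ℝ)+2)^2) * ((‖B‖ * Mf * Mg) * (ω * P)) := by ring
      -- assemble
      rw [hkey]
      calc ‖∑ s : Finset (Fin k), _‖
          ≤ (Finset.univ : Finset (Finset (Fin k))).card •
              ((((n:ℝ)+2)^2) * ((‖B‖ * Mf * Mg) * (ω * P))) := by
            refine (norm_sum_le _ _).trans ?_
            exact Finset.sum_le_card_nsmul _ _ _ (fun s _ => hper s)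
        _ = (2:ℝ)^k * ((((n:ℝ)+2)^2) * ((‖B‖ * Mf * Mg) * (ω * P))) := by
            rw [Finset.card_univ, Fintype.card_finset, Fintype.card_fin, nsmul_eq_mul]
            push_cast
            ring
        _ ≤ C * ‖B‖ * Mf * Mg * ω * P := by
            have hb0 : (0:ℝ) ≤ (‖B‖ * Mf * Mg) * (ω * P) :=
              mul_nonneg hK (mul_nonneg hω0 hP0)
            have h2k : (2:ℝ)^k ≤ 2^n := pow_le_pow_right₀ one_le_two hkn
            have hfc : (2:ℝ)^k * (((n:ℝ)+2)^2) ≤ C := by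
              rw [hCdef]
              have h1 : (2:ℝ)^k * (((n:ℝ)+2)^2) ≤ 2^n * (((n:ℝ)+2)^2) := by
                refine mul_le_mul_of_nonneg_right h2k (by positivity)
              have h2 : (0:ℝ) ≤ 2^n * ((n:ℝ)+2) := by positivity
              linarith
            calc (2:ℝ)^k * ((((n:ℝ)+2)^2) * ((‖B‖ * Mf * Mg) * (ω * P)))
                = ((2:ℝ)^k * (((n:ℝ)+2)^2)) * ((‖B‖ * Mf * Mg) * (ω * P)) := by ring
              _ ≤ C * ((‖B‖ * Mf * Mg) * (ω * P)) := mul_le_mul_of_nonneg_right hfc hb0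
              _ = C * ‖B‖ * Mf * Mg * ω * P := by ring
    · -- crude case : 1 < ‖w‖
      have hw1' : (1:ℝ) ≤ ‖w‖ := (lt_of_not_ge hw1).le
      have hω1 : (1:ℝ) ≤ ‖w‖ ^ (γ - (k:ℝ)) := Real.one_le_rpow hw1' hγk
      have hwj : ∀ j : ℕ, j ≤ n - k → ‖w‖^j ≤ ‖w‖ ^ (γ - (k:ℝ)) := by
        intro j hj
        rw [← Real.rpow_natCast ‖w‖ j]
        apply Real.rpow_le_rpow_of_exponent_le hw1'
        have hjk : j + k ≤ n := by omega
        have : ((j+k:ℕ):ℝ) ≤ (n:ℝ) := Nat.cast_le.2 hjk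
        push_cast at this
        rw [hγ]; linarith
      have hlhs : lipRemainder n h k x y v = h k x v - ∑ j ∈ Finset.range (n-k+1),
          ((j.factorial:ℝ))⁻¹ • h (k+j) y (Fin.append v fun _ : Fin j => w) := rfl
      rw [hlhs]
      have hterm : ∀ j ∈ Finset.range (n-k+1),
          ‖((j.factorial:ℝ))⁻¹ • h (k+j) y (Fin.append v fun _ : Fin j => w)‖
            ≤ 2^n * (‖B‖ * Mf * Mg) * ‖w‖ ^ (γ - (k:ℝ)) * ∏ i, ‖v i‖ := by
        intro j hj
        rw [Finset.mem_range] at hj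
        have hkj : k + j ≤ n := by omega
        rw [norm_smul]
        have h1 := hbound (k+j) hkj y hy (Fin.append v fun _ : Fin j => w)
        rw [happrod k v j] at h1
        have hfac : |((j.factorial:ℝ))⁻¹| ≤ 1 := by
          rw [abs_of_nonneg (by positivity)]
          rw [inv_le_one_iff₀]
          right
          exact_mod_cast j.factorial_pos
        calc |((j.factorial:ℝ))⁻¹| * ‖h (k+j) y (Fin.append v fun _ : Fin j => w)‖
            ≤ 1 * (2^(k+j) * (‖B‖ * Mf * Mg) * ((∏ i, ‖v i‖) * ‖w‖^j)) := by
              apply mul_le_mul hfac h1 (norm_nonneg _) zero_le_one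
          _ = 2^(k+j) * (‖B‖ * Mf * Mg) * ‖w‖^j * ∏ i, ‖v i‖ := by ring
          _ ≤ 2^n * (‖B‖ * Mf * Mg) * ‖w‖ ^ (γ - (k:ℝ)) * ∏ i, ‖v i‖ := by
              gcongr
              · exact one_le_two
              · exact hwj j (by omega)
      calc ‖h k x v - ∑ j ∈ Finset.range (n-k+1),
            ((j.factorial:ℝ))⁻¹ • h (k+j) y (Fin.append v fun _ : Fin j => w)‖
          ≤ ‖h k x v‖ + ‖∑ j ∈ Finset.range (n-k+1),
            ((j.factorial:ℝ))⁻¹ • h (k+j) y (Fin.append v fun _ : Fin j => w)‖ := norm_sub_le _ _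
        _ ≤ 2^n * (‖B‖ * Mf * Mg) * ‖w‖ ^ (γ - (k:ℝ)) * ∏ i, ‖v i‖
            + ∑ j ∈ Finset.range (n-k+1), ‖((j.factorial:ℝ))⁻¹ •
                h (k+j) y (Fin.append v fun _ : Fin j => w)‖ := by
              gcongr
              · refine (hbound k hkn x hx v).trans ?_
                have h2k : (2:ℝ)^k ≤ 2^n := pow_le_pow_right₀ one_le_two hkn
                calc 2^k * (‖B‖ * Mf * Mg) * ∏ i, ‖v i‖
                    = (2^k * (‖B‖ * Mf * Mg)) * 1 * ∏ i, ‖v i‖ := by ring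
                  _ ≤ (2^n * (‖B‖ * Mf * Mg)) * ‖w‖ ^ (γ - (k:ℝ)) * ∏ i, ‖v i‖ := by
                      gcongr
                  _ = 2^n * (‖B‖ * Mf * Mg) * ‖w‖ ^ (γ - (k:ℝ)) * ∏ i, ‖v i‖ := by ring
              · exact norm_sum_le _ _
        _ ≤ 2^n * (‖B‖ * Mf * Mg) * ‖w‖ ^ (γ - (k:ℝ)) * ∏ i, ‖v i‖
            + ∑ _j ∈ Finset.range (n-k+1),
              2^n * (‖B‖ * Mf * Mg) * ‖w‖ ^ (γ - (k:ℝ)) * ∏ i, ‖v i‖ := by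
              gcongr with j hj
              exact hterm j hj
        _ = (1 + ((n:ℝ)-(k:ℝ)+1)) * (2^n * (‖B‖ * Mf * Mg) * ‖w‖ ^ (γ - (k:ℝ)) * ∏ i, ‖v i‖) := by
              rw [Finset.sum_const, Finset.card_range, nsmul_eq_mul]
              have : ((n - k + 1 : ℕ):ℝ) = (n:ℝ) - (k:ℝ) + 1 := by
                have : ((n - k + 1 : ℕ):ℝ) = ((n:ℕ):ℝ) - ((k:ℕ):ℝ) + 1 := by
                  rw [Nat.cast_add, Nat.cast_sub hkn]; norm_num
                exact this
              rw [this]; ring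
        _ ≤ C * ‖B‖ * Mf * Mg * ‖w‖ ^ (γ - (k:ℝ)) * ∏ i, ‖v i‖ := by
              have hkr : (0:ℝ) ≤ (k:ℝ) := Nat.cast_nonneg k
              have hnk : (k:ℝ) ≤ (n:ℝ) := Nat.cast_le.2 hkn
              have hX0 : (0:ℝ) ≤ (‖B‖ * Mf * Mg) * (‖w‖ ^ (γ - (k:ℝ)) * ∏ i, ‖v i‖) :=
                mul_nonneg hK (mul_nonneg hω0 hP0)
              have hfac : (1 + ((n:ℝ)-(k:ℝ)+1)) * 2^n ≤ C := by
                rw [hCdef]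
                have h1 : (1 + ((n:ℝ)-(k:ℝ)+1)) ≤ (n:ℝ)+2 := by linarith
                have h2 : (1 + ((n:ℝ)-(k:ℝ)+1)) * 2^n ≤ ((n:ℝ)+2) * 2^n :=
                  mul_le_mul_of_nonneg_right h1 h2n.le
                have h3 : (0:ℝ) ≤ 2^n * ((n:ℝ)+2)^2 := by positivity
                linarith
              calc (1 + ((n:ℝ)-(k:ℝ)+1)) * (2^n * (‖B‖ * Mf * Mg) * ‖w‖ ^ (γ - (k:ℝ)) * ∏ i, ‖v i‖)
                  = ((1 + ((n:ℝ)-(k:ℝ)+1)) * 2^n) *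
                    ((‖B‖ * Mf * Mg) * (‖w‖ ^ (γ - (k:ℝ)) * ∏ i, ‖v i‖)) := by ring
                _ ≤ C * ((‖B‖ * Mf * Mg) * (‖w‖ ^ (γ - (k:ℝ)) * ∏ i, ‖v i‖)) :=
                    mul_le_mul_of_nonneg_right hfac hX0
                _ = C * ‖B‖ * Mf * Mg * ‖w‖ ^ (γ - (k:ℝ)) * ∏ i, ‖v i‖ := by ring


end
end
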